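/- arXiv:2202.10289 — 15 statements merged into one kernel-verified Lean document; each statement's English description precedes it below -/
import Mathlib

section
/- Let (I, 𝓘, μ) and (I', 𝓘', μ') be measurable spaces with finite measures of total masses N = μ(I) > 0 and N' = μ'(I') > 0, and let w be an evolutionary process from μ to μ', i.e. a family of finite measures w_i on I' measurable in i with μ'(B) = ∫_I w_i(B) dμ(i) for all measurable B. Define W(i) := w_i(I'), W̄ := N'/N, U := W/W̄, and for integrable X on I and Y on I' define E[X] := (1/N)∫X dμ, E'[Y] := (1/N')∫Y dμ', ⟨Y⟩_w(i) := (1/W(i))∫Y(i') dw_i(i') (on {W>0}), and Δ_w(X,Y)(i) := ⟨Y⟩_w(i) − X(i). Then the Price equation holds: E'[Y] − E[X] = cov(X,U) + E[Δ_w(X,Y)·U], where cov(X,U) = E[X(U−1)]. -/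
open MeasureTheory Set ProbabilityTheory

/-!
Since `W(i) · ⟨Y⟩_w(i) = ∫ Y dw_i`, the product `U · ⟨Y⟩_w` is `(N / N') ∫ Y dw_i`; as `μ'` is
the composition of `μ` with the kernel `w`, integrating it against `μ` gives `(N / N') ∫ Y dμ'`.
Splitting `U · ⟨Y⟩_w = X · U + Δ_w(X, Y) · U` and `X · (U - 1) = X · U - X` then gives the
equation by linearity of the integral.
-/

lemma MeasureTheory.Measure.integral_comp {α β E : Type*} [MeasurableSpace α] [MeasurableSpace β]
    [NormedAddCommGroup E] [NormedSpace ℝ E] {μ : Measure α} {κ : Kernel α β} {f : β → E}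
    (hf : Integrable f (κ ∘ₘ μ)) :
    ∫ y, f y ∂(κ ∘ₘ μ) = ∫ x, ∫ y, f y ∂κ x ∂μ := by
  rw [Measure.comp_eq_comp_const_apply] at hf ⊢
  rw [Kernel.integral_comp hf, Kernel.const_apply]

def ProbabilityTheory.Kernel.ofMeasurableCoe {α β : Type*} [MeasurableSpace α] [MeasurableSpace β]
    (w : α → Measure β) (hw : ∀ B : Set β, MeasurableSet B → Measurable fun i => w i B) :
    Kernel α β :=
  ⟨w, Measure.measurable_of_measurable_coe w hw⟩

lemma MeasureTheory.Measure.eq_comp_ofMeasurableCoe {α β : Type*} [MeasurableSpace α]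
    [MeasurableSpace β] {μ : Measure α} {μ' : Measure β} {w : α → Measure β}
    (hw : ∀ B : Set β, MeasurableSet B → Measurable fun i => w i B)
    (hdis : ∀ B : Set β, MeasurableSet B → μ' B = ∫⁻ i, w i B ∂μ) :
    μ' = Kernel.ofMeasurableCoe w hw ∘ₘ μ :=
  Measure.ext fun B hB => by
    rw [hdis B hB, Measure.bind_apply hB (Kernel.aemeasurable _)]
    rfl

lemma integral_div_mass_mul_mass_div {β : Type*} [MeasurableSpace β] (ν : Measure β)
    [IsFiniteMeasure ν] (f : β → ℝ) (c : ℝ) :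
    (∫ y, f y ∂ν) / (ν univ).toReal * ((ν univ).toReal / c) = (∫ y, f y ∂ν) / c := by
  rcases eq_zero_or_neZero ν with rfl | _
  · simp
  have : (ν univ).toReal ≠ 0 := (measureReal_univ_pos (μ := ν)).ne'
  field_simp

theorem price_equation_general
    {I I' : Type*} [MeasurableSpace I] [MeasurableSpace I']
    (μ : Measure I) (μ' : Measure I')
    (hN : 0 < (μ univ).toReal)
    (w : I → Measure I') (hwfin : ∀ i, IsFiniteMeasure (w i))
    (hwm : ∀ B : Set I', MeasurableSet B → Measurable fun i => w i B)
    (hdis : ∀ B : Set I', MeasurableSet B → μ' B = ∫⁻ i, w i B ∂μ)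
    (X : I → ℝ) (Y : I' → ℝ) (hX : Integrable X μ) (hY : Integrable Y μ') :
    let N := (μ univ).toReal
    let N' := (μ' univ).toReal
    let W : I → ℝ := fun i => (w i univ).toReal
    let U : I → ℝ := fun i => W i / (N' / N)
    let lavg : I → ℝ := fun i => (∫ y, Y y ∂(w i)) / W i
    Integrable (fun i => X i * U i) μ →
    Integrable (fun i => (lavg i - X i) * U i) μ →
    (∫ y, Y y ∂μ') / N' - (∫ x, X x ∂μ) / N
      = (∫ x, X x * (U x - 1) ∂μ) / N + (∫ x, (lavg x - X x) * U x ∂μ) / N := by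
  intro N N' W U lavg hXU hΔU
  have hcomp := Measure.eq_comp_ofMeasurableCoe hwm hdis
  have hlavgU : ∫ x, lavg x * U x ∂μ = (∫ y, Y y ∂μ') / (N' / N) := by
    have (i : I) : lavg i * U i = (∫ y, Y y ∂(w i)) / (N' / N) :=
      haveI := hwfin i
      integral_div_mass_mul_mass_div (w i) Y _
    simp_rw [this, integral_div]
    rw [hcomp] at hY ⊢
    rw [Measure.integral_comp hY]
    rfl
  have hsplit : ∫ x, lavg x * U x ∂μ = ∫ x, (lavg x - X x) * U x ∂μ + ∫ x, X x * U x ∂μ := by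
    rw [← integral_add hΔU hXU]
    simp_rw [sub_mul, sub_add_cancel]
  have hcov : ∫ x, X x * (U x - 1) ∂μ = ∫ x, X x * U x ∂μ - ∫ x, X x ∂μ := by
    rw [← integral_sub hXU hX]
    simp_rw [mul_sub, mul_one]
  have hΔ : ∫ x, (lavg x - X x) * U x ∂μ = (∫ y, Y y ∂μ') / (N' / N) - ∫ x, X x * U x ∂μ := by
    linarith
  have hN0 : N ≠ 0 := hN.ne'
  rw [hcov, hΔ]
  field_simp
  ring

/-- The general Price equation: for an evolutionary process `w : μ ↦ μ'`
(a measurable disintegration of the finite measure `μ'` over `μ`),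
the average change `E'[Y] − E[X]` decomposes into the selective change
`cov(X,U) = E[X(U−1)]` plus the environmental change `E[(⟨Y⟩_w − X)·U]`. -/
theorem price_equation
    {I I' : Type*} [MeasurableSpace I] [MeasurableSpace I']
    (μ : Measure I) (μ' : Measure I') [IsFiniteMeasure μ] [IsFiniteMeasure μ']
    (hN : 0 < (μ univ).toReal) (hN' : 0 < (μ' univ).toReal)
    (w : I → Measure I') (hwfin : ∀ i, IsFiniteMeasure (w i))
    (hwm : ∀ B : Set I', MeasurableSet B → Measurable fun i => w i B)
    (hdis : ∀ B : Set I', MeasurableSet B → μ' B = ∫⁻ i, w i B ∂μ)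
    (X : I → ℝ) (Y : I' → ℝ) (hX : Integrable X μ) (hY : Integrable Y μ') :
    let N := (μ univ).toReal
    let N' := (μ' univ).toReal
    let W : I → ℝ := fun i => (w i univ).toReal
    let U : I → ℝ := fun i => W i / (N' / N)
    let lavg : I → ℝ := fun i => (∫ y, Y y ∂(w i)) / W i
    Integrable (fun i => X i * U i) μ →
    Integrable (fun i => (lavg i - X i) * U i) μ →
    (∫ y, Y y ∂μ') / N' - (∫ x, X x ∂μ) / N
      = (∫ x, X x * (U x - 1) ∂μ) / N + (∫ x, (lavg x - X x) * U x ∂μ) / N :=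
  price_equation_general μ μ' hN w hwfin hwm hdis X Y hX hY
end

section
/- Let w : μ ↦ μ' and w' : μ' ↦ μ'' be composable evolutionary processes between finite measures, with relative fitness functions U = W/E[W] and U' = W'/E'[W'] respectively, where U has finite variance. Then 0 = var(U) + E[(⟨U'⟩_w − U)·U], i.e. the environmental change of relative fitness equals minus its variance: E[Δ_w(U,U')·U] = −var(U). -/
open MeasureTheory Real Set

/-!
The hypotheses say that `μ' = μ.bind w`. Hence `E[U] = 1`, because the offspring of `μ` make up
`μ'`, and `E[⟨U'⟩_w · U] = 1`, because `⟨U'⟩_w · W = ∫ U' ∂(w i)` with `W i = w i univ`, which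
integrates over `μ` to `∫ U' ∂μ' = N'`. Expanding the integrands then gives
`E[(U - 1)²] + E[(⟨U'⟩_w - U) · U] = E[⟨U'⟩_w · U] - 2 E[U] + 1 = 0`.
-/

section

variable {α β : Type*} [MeasurableSpace α] [MeasurableSpace β]

theorem MeasureTheory.Measure.eq_bind_of_apply_eq_lintegral {μ : Measure α} {ν : Measure β}
    {κ : α → Measure β} (hκ : Measurable κ)
    (h : ∀ s, MeasurableSet s → ν s = ∫⁻ a, κ a s ∂μ) : ν = μ.bind κ := by
  ext s hs
  rw [Measure.bind_apply hs hκ.aemeasurable, h s hs]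

theorem integral_toReal_measure_univ_eq {μ : Measure α} {ν : Measure β} {κ : α → Measure β}
    [∀ a, IsFiniteMeasure (κ a)] (hκ : Measurable fun a => κ a univ)
    (h : ν univ = ∫⁻ a, κ a univ ∂μ) : ∫ a, (κ a univ).toReal ∂μ = (ν univ).toReal := by
  rw [integral_toReal hκ.aemeasurable (ae_of_all _ fun a => measure_lt_top (κ a) univ), h]

theorem integral_integral_toReal_eq_integral_bind {μ : Measure α} {κ : α → Measure β}
    (hκ : Measurable κ) {g : β → ENNReal} (hg : Measurable g) (hg_fin : ∀ b, g b ≠ ⊤)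
    (h : ∫⁻ b, g b ∂μ.bind κ ≠ ⊤) :
    ∫ a, ∫ b, (g b).toReal ∂κ a ∂μ = ∫ b, (g b).toReal ∂μ.bind κ := by
  have hg_lt : ∀ ν : Measure β, ∀ᵐ b ∂ν, g b < ⊤ := fun ν => ae_of_all _ fun b => (hg_fin b).lt_top
  have hinner : Measurable fun a => ∫⁻ b, g b ∂κ a := (Measure.measurable_lintegral hg).comp hκ
  rw [Measure.lintegral_bind hκ.aemeasurable hg.aemeasurable] at h
  simp_rw [integral_toReal hg.aemeasurable (hg_lt _)]
  rw [integral_toReal hinner.aemeasurable (ae_lt_top hinner h),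
    Measure.lintegral_bind hκ.aemeasurable hg.aemeasurable]

theorem integral_div_toReal_measure_univ_mul (ν : Measure β) [IsFiniteMeasure ν] (f : β → ℝ) :
    (∫ b, f b ∂ν) / (ν univ).toReal * (ν univ).toReal = ∫ b, f b ∂ν := by
  rcases eq_zero_or_neZero ν with rfl | _
  · simp
  · exact div_mul_cancel₀ _ (measureReal_univ_ne_zero (μ := ν))

theorem integral_sq_sub_one_add_integral_sub_mul_eq_zero {μ : Measure α} [IsFiniteMeasure μ]
    {U L : α → ℝ} (hU : Integrable U μ) (hU2 : Integrable (fun a => U a ^ 2) μ)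
    (hLU : Integrable (fun a => (L a - U a) * U a) μ) (hmeanU : ∫ a, U a ∂μ = μ.real univ)
    (hmeanLU : ∫ a, L a * U a ∂μ = μ.real univ) :
    ∫ a, (U a - 1) ^ 2 ∂μ + ∫ a, (L a - U a) * U a ∂μ = 0 := by
  have hLU' : Integrable (fun a => L a * U a) μ := by
    refine (hLU.add hU2).congr (ae_of_all _ fun a => ?_)
    simp only [Pi.add_apply]; ring
  have hLU2 : Integrable (fun a => L a * U a - 2 * U a) μ := hLU'.sub (hU.const_mul 2)
  have hsq : Integrable (fun a => (U a - 1) ^ 2) μ := by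
    refine ((hU2.sub (hU.const_mul 2)).add (integrable_const 1)).congr (ae_of_all _ fun a => ?_)
    simp only [Pi.add_apply, Pi.sub_apply]; ring
  have hexpand : ∀ a, (U a - 1) ^ 2 + (L a - U a) * U a = L a * U a - 2 * U a + 1 := by
    intro a; ring
  rw [← integral_add hsq hLU, integral_congr_ae (ae_of_all _ hexpand),
    integral_add hLU2 (integrable_const 1),
    integral_sub hLU' (hU.const_mul 2), integral_const_mul, hmeanU, hmeanLU, integral_const,
    smul_eq_mul]
  ring

end

theorem fisher_fundamental_theorem_general
    {I I' I'' : Type*} [MeasurableSpace I] [MeasurableSpace I'] [MeasurableSpace I'']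
    (μ : Measure I) (μ' : Measure I') (μ'' : Measure I'')
    [IsFiniteMeasure μ] [IsFiniteMeasure μ'] [IsFiniteMeasure μ'']
    (hN' : 0 < (μ' univ).toReal) (hN'' : 0 < (μ'' univ).toReal)
    (w : I → Measure I') (w' : I' → Measure I'')
    (hwfin : ∀ i, IsFiniteMeasure (w i)) (hw'fin : ∀ i', IsFiniteMeasure (w' i'))
    (hwm : ∀ B : Set I', MeasurableSet B → Measurable fun i => w i B)
    (hw'm : ∀ C : Set I'', MeasurableSet C → Measurable fun i' => w' i' C)
    (hdis : ∀ B : Set I', MeasurableSet B → μ' B = ∫⁻ i, w i B ∂μ)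
    (hdis' : ∀ C : Set I'', MeasurableSet C → μ'' C = ∫⁻ i', w' i' C ∂μ') :
    let N := (μ univ).toReal
    let N' := (μ' univ).toReal
    let N'' := (μ'' univ).toReal
    let U : I → ℝ := fun i => (w i univ).toReal / (N' / N)
    let U' : I' → ℝ := fun i' => (w' i' univ).toReal / (N'' / N')
    let lavg : I → ℝ := fun i => (∫ i', U' i' ∂(w i)) / (w i univ).toReal
    Integrable (fun i => (U i) ^ 2) μ →
    Integrable (fun i => (lavg i - U i) * U i) μ →
    0 = (∫ i, (U i - 1) ^ 2 ∂μ) / N + (∫ i, (lavg i - U i) * U i ∂μ) / N := by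
  intro N N' N'' U U' lavg hU2 hLU
  have hw : Measurable w := Measure.measurable_of_measurable_coe w hwm
  have hW := hwm univ .univ
  have hmeanW : ∫ i, (w i univ).toReal ∂μ = N' := integral_toReal_measure_univ_eq hW (hdis _ .univ)
  have hmeanW' : ∫ i', (w' i' univ).toReal ∂μ' = N'' :=
    integral_toReal_measure_univ_eq (hw'm univ .univ) (hdis' _ .univ)
  have hbind : μ' = μ.bind w := Measure.eq_bind_of_apply_eq_lintegral hw hdis
  have hcomp : ∫ i, ∫ i', (w' i' univ).toReal ∂(w i) ∂μ = N'' := by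
    have hfin : ∫⁻ i', w' i' univ ∂μ.bind w ≠ ⊤ := by
      rw [← hbind, ← hdis' _ .univ]; exact measure_ne_top _ _
    rw [integral_integral_toReal_eq_integral_bind hw (hw'm univ .univ)
      (fun _ => measure_ne_top _ _) hfin, ← hbind, hmeanW']
  have hU : Integrable U μ :=
    (integrable_toReal_of_lintegral_ne_top hW.aemeasurable
      (by rw [← hdis _ .univ]; exact measure_ne_top _ _)).div_const _
  have hmeanU : ∫ i, U i ∂μ = N := by
    rw [integral_div, hmeanW, div_div_cancel₀ hN'.ne']
  have hmeanLU : ∫ i, lavg i * U i ∂μ = N := by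
    have hlavg : ∀ i, lavg i * U i = (∫ i', (w' i' univ).toReal ∂(w i)) / (N'' / N') / (N' / N) := by
      intro i
      rw [mul_div_assoc', integral_div_toReal_measure_univ_mul, integral_div]
    rw [integral_congr_ae (ae_of_all _ hlavg), integral_div, integral_div, hcomp,
      div_div_cancel₀ hN''.ne', div_div_cancel₀ hN'.ne']
  rw [← add_div, integral_sq_sub_one_add_integral_sub_mul_eq_zero hU hU2 hLU hmeanU hmeanLU,
    zero_div]

/-- Generalized Fisher fundamental theorem: for composable evolutionary processes
`w : μ ↦ μ'` and `w' : μ' ↦ μ''` with relative fitnesses `U` and `U'`,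
the total change of relative fitness vanishes, so
`0 = var(U) + E[(⟨U'⟩_w − U)·U]`, i.e. the environmental change of relative
fitness equals minus its variance. -/
theorem fisher_fundamental_theorem
    {I I' I'' : Type*} [MeasurableSpace I] [MeasurableSpace I'] [MeasurableSpace I'']
    (μ : Measure I) (μ' : Measure I') (μ'' : Measure I'')
    [IsFiniteMeasure μ] [IsFiniteMeasure μ'] [IsFiniteMeasure μ'']
    (hN : 0 < (μ univ).toReal) (hN' : 0 < (μ' univ).toReal) (hN'' : 0 < (μ'' univ).toReal)
    (w : I → Measure I') (w' : I' → Measure I'')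
    (hwfin : ∀ i, IsFiniteMeasure (w i)) (hw'fin : ∀ i', IsFiniteMeasure (w' i'))
    (hwm : ∀ B : Set I', MeasurableSet B → Measurable fun i => w i B)
    (hw'm : ∀ C : Set I'', MeasurableSet C → Measurable fun i' => w' i' C)
    (hdis : ∀ B : Set I', MeasurableSet B → μ' B = ∫⁻ i, w i B ∂μ)
    (hdis' : ∀ C : Set I'', MeasurableSet C → μ'' C = ∫⁻ i', w' i' C ∂μ') :
    let N := (μ univ).toReal
    let N' := (μ' univ).toReal
    let N'' := (μ'' univ).toReal
    let U : I → ℝ := fun i => (w i univ).toReal / (N' / N)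
    let U' : I' → ℝ := fun i' => (w' i' univ).toReal / (N'' / N')
    let lavg : I → ℝ := fun i => (∫ i', U' i' ∂(w i)) / (w i univ).toReal
    Integrable (fun i => (U i) ^ 2) μ →
    Integrable (fun i => (lavg i - U i) * U i) μ →
    0 = (∫ i, (U i - 1) ^ 2 ∂μ) / N + (∫ i, (lavg i - U i) * U i ∂μ) / N :=
  fisher_fundamental_theorem_general μ μ' μ'' hN' hN'' w w' hwfin hw'fin hwm hw'm hdis hdis'
end

section
/- Let (Ω, μ) be a finite measure space with μ(Ω) = N > 0, let E[X] = (1/N)∫X dμ, and let U ≥ 0 be a measurable function with E[U] = 1 and E[U²] < ∞. Let p* := μ(U>0)/N. Then var(U) := E[U²] − 1 ≥ 1/p* − 1, with equality if and only if U takes only the values 0 and 1/p* almost everywhere. -/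
open MeasureTheory Real Set

/-! On the child-bearing set `S = {U > 0}`, of measure `m`, the function `U` has integral `N` and
the same second moment as on all of `Ω`. Expanding the square gives
`0 ≤ ∫_S (U - N/m)² = ∫ U² - N²/m`, which is `var U ≥ 1/p* - 1`; equality holds iff `U = N/m = 1/p*`
almost everywhere on `S`, while `U = 0` off `S`. -/

section SecondMoment

variable {α : Type*} [MeasurableSpace α] {μ : Measure α} {s : Set α} {f : α → ℝ}

theorem integrableOn_sq_sub_const (hf : IntegrableOn f s μ)
    (hf2 : IntegrableOn (fun x => f x ^ 2) s μ) (hs : μ s ≠ ⊤) (c : ℝ) :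
    IntegrableOn (fun x => (f x - c) ^ 2) s μ := by
  have hexpand : (fun x => (f x - c) ^ 2) = fun x => f x ^ 2 - (2 * c) * f x + c ^ 2 := by
    funext x; ring
  rw [hexpand]
  exact (hf2.sub (hf.const_mul _)).add (integrableOn_const hs)

theorem setIntegral_sq_sub_div_measureReal (hs : μ.real s ≠ 0) (hf : IntegrableOn f s μ)
    (hf2 : IntegrableOn (fun x => f x ^ 2) s μ) :
    ∫ x in s, (f x - (∫ x in s, f x ∂μ) / μ.real s) ^ 2 ∂μ
      = ∫ x in s, f x ^ 2 ∂μ - (∫ x in s, f x ∂μ) ^ 2 / μ.real s := by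
  set c := (∫ x in s, f x ∂μ) / μ.real s
  have hs_fin : μ s ≠ ⊤ := (ENNReal.toReal_ne_zero.mp hs).2
  have hexpand : (fun x => (f x - c) ^ 2) = fun x => f x ^ 2 - (2 * c) * f x + c ^ 2 := by
    funext x; ring
  have hconst : IntegrableOn (fun _ => c ^ 2) s μ := integrableOn_const hs_fin
  rw [hexpand, integral_add ?_ hconst, integral_sub hf2 (hf.const_mul _),
    integral_const_mul, setIntegral_const, smul_eq_mul]
  · simp only [c]
    field_simp
    ring
  · exact hf2.sub (hf.const_mul _)

theorem sq_setIntegral_div_le_setIntegral_sq (hs : μ.real s ≠ 0) (hf : IntegrableOn f s μ)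
    (hf2 : IntegrableOn (fun x => f x ^ 2) s μ) :
    (∫ x in s, f x ∂μ) ^ 2 / μ.real s ≤ ∫ x in s, f x ^ 2 ∂μ := by
  have hnonneg : 0 ≤ ∫ x in s, (f x - (∫ x in s, f x ∂μ) / μ.real s) ^ 2 ∂μ :=
    integral_nonneg fun _ => sq_nonneg _
  linarith [setIntegral_sq_sub_div_measureReal hs hf hf2]

theorem sq_setIntegral_div_eq_setIntegral_sq_iff (hs : μ.real s ≠ 0) (hf : IntegrableOn f s μ)
    (hf2 : IntegrableOn (fun x => f x ^ 2) s μ) :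
    (∫ x in s, f x ∂μ) ^ 2 / μ.real s = ∫ x in s, f x ^ 2 ∂μ ↔
      ∀ᵐ x ∂μ.restrict s, f x = (∫ x in s, f x ∂μ) / μ.real s := by
  have hs_fin : μ s ≠ ⊤ := (ENNReal.toReal_ne_zero.mp hs).2
  rw [eq_comm, ← sub_eq_zero, ← setIntegral_sq_sub_div_measureReal hs hf hf2,
    integral_eq_zero_iff_of_nonneg (fun _ => sq_nonneg _)
      (integrableOn_sq_sub_const hf hf2 hs_fin _)]
  refine Filter.eventually_congr (Filter.Eventually.of_forall fun x => ?_)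
  simp [sub_eq_zero]

theorem setIntegral_pos_eq_integral_of_nonneg (hf0 : ∀ x, 0 ≤ f x) {g : ℝ → ℝ} (hg : g 0 = 0) :
    ∫ x in {x | 0 < f x}, g (f x) ∂μ = ∫ x, g (f x) ∂μ :=
  setIntegral_eq_integral_of_forall_compl_eq_zero fun x hx => by
    rw [le_antisymm (not_lt.mp hx) (hf0 x), hg]

theorem ae_restrict_pos_eq_iff_of_nonneg (hfm : Measurable f) (hf0 : ∀ x, 0 ≤ f x) (c : ℝ) :
    (∀ᵐ x ∂μ.restrict {x | 0 < f x}, f x = c) ↔ ∀ᵐ x ∂μ, f x = 0 ∨ f x = c := by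
  rw [ae_restrict_iff' (measurableSet_lt measurable_const hfm)]
  refine Filter.eventually_congr (Filter.Eventually.of_forall fun x => ?_)
  rcases (hf0 x).eq_or_lt with h0 | hpos
  · simp [← h0]
  · simp [hpos, hpos.ne']

end SecondMoment

theorem weak_zeroth_law_general
    {Ω : Type*} [MeasurableSpace Ω] (μ : Measure Ω)
    (U : Ω → ℝ) (hUm : Measurable U) (hU0 : ∀ x, 0 ≤ U x)
    (hU1 : (∫ x, U x ∂μ) / (μ univ).toReal = 1)
    (hU2 : Integrable (fun x => (U x) ^ 2) μ) :
    let N := (μ univ).toReal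
    let pstar := (μ {x | 0 < U x}).toReal / N
    let v := (∫ x, (U x) ^ 2 ∂μ) / N - 1
    v ≥ 1 / pstar - 1 ∧
      (v = 1 / pstar - 1 ↔ ∀ᵐ x ∂μ, U x = 0 ∨ U x = 1 / pstar) := by
  intro N pstar v
  set S := {x | 0 < U x}
  have hN : N ≠ 0 := fun h => by simp [N] at h; simp [h] at hU1
  have : IsFiniteMeasure μ := ⟨(ENNReal.toReal_ne_zero.mp hN).2.lt_top⟩
  have hint : ∫ x in S, U x ∂μ = N :=
    (setIntegral_pos_eq_integral_of_nonneg hU0 (g := id) rfl).trans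
      ((div_eq_one_iff_eq hN).mp hU1)
  have hint2 : ∫ x in S, U x ^ 2 ∂μ = ∫ x, U x ^ 2 ∂μ :=
    setIntegral_pos_eq_integral_of_nonneg hU0 (zero_pow two_ne_zero)
  have hm : μ.real S ≠ 0 := fun h =>
    hN (by rw [← hint, setIntegral_measure_zero _ ((measureReal_eq_zero_iff ..).mp h)])
  have hUS : IntegrableOn U S μ :=
    (((memLp_two_iff_integrable_sq hUm.aestronglyMeasurable).mpr hU2).integrable
      one_le_two).integrableOn
  have hle := sq_setIntegral_div_le_setIntegral_sq hm hUS hU2.integrableOn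
  have heq := sq_setIntegral_div_eq_setIntegral_sq_iff hm hUS hU2.integrableOn
  rw [hint, hint2] at hle heq
  have hpstar : 1 / pstar = N / μ.real S := one_div_div _ _
  have hgap : v - (1 / pstar - 1) = (∫ x, U x ^ 2 ∂μ - N ^ 2 / μ.real S) / N := by
    simp only [v, hpstar]; field_simp; ring
  have hN_pos : 0 < N := lt_of_le_of_ne ENNReal.toReal_nonneg (Ne.symm hN)
  refine ⟨sub_nonneg.mp (hgap ▸ div_nonneg (sub_nonneg.mpr hle) hN_pos.le), ?_⟩
  rw [← sub_eq_zero, hgap, div_eq_zero_iff, or_iff_left hN, sub_eq_zero, eq_comm, heq,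
    ← hpstar, ae_restrict_pos_eq_iff_of_nonneg hUm hU0]

/-- Weak Zeroth Law of Natural Selection: for a relative fitness `U ≥ 0` of unit mean
on a finite measure space, `var(U) = E[U²] − 1 ≥ 1/p* − 1`, where
`p* = μ(U>0)/N` is the childbearing proportion, with equality iff
`U ∈ {0, 1/p*}` almost everywhere (selective equilibrium). -/
theorem weak_zeroth_law
    {Ω : Type*} [MeasurableSpace Ω] (μ : Measure Ω) [IsFiniteMeasure μ]
    (hN : 0 < (μ univ).toReal)
    (U : Ω → ℝ) (hUm : Measurable U) (hU0 : ∀ x, 0 ≤ U x)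
    (hU1 : (∫ x, U x ∂μ) / (μ univ).toReal = 1)
    (hU2 : Integrable (fun x => (U x) ^ 2) μ) :
    let N := (μ univ).toReal
    let pstar := (μ {x | 0 < U x}).toReal / N
    let v := (∫ x, (U x) ^ 2 ∂μ) / N - 1
    v ≥ 1 / pstar - 1 ∧
      (v = 1 / pstar - 1 ↔ ∀ᵐ x ∂μ, U x = 0 ∨ U x = 1 / pstar) :=
  weak_zeroth_law_general μ U hUm hU0 hU1 hU2
end

section
/- Let (Ω, μ) be a finite measure space with normalized expectation E, and let U ≥ 0 be measurable with E[U] = 1 and E[U³] < ∞. Then cov(U², U) := E[U²(U−1)] ≥ var(U)·(1 + var(U)) = var(U)·E[U²] ≥ 0, with equality in the first inequality if and only if U is almost surely constant on {U > 0} (selective equilibrium), i.e., U ∈ {0, 1/p*} a.e. where p* = μ(U>0)/μ(Ω). -/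
/-!
With `E` the normalized expectation and `k := E[U²]`, the constraint `E[U] = 1` turns
`cov(U², U) - var(U)(1 + var(U))` into `E[U³] - k² = E[U (U - k)²]`: the variance of `U`
under the tilted probability measure `U·μ/N`, whose mean is `k`. So it is nonnegative (Jensen),
and it vanishes iff `U ∈ {0, k}` a.e. If `U ∈ {0, a}` a.e., then `E[U²] = a·E[U]` and
`E[U] = a·p*`, so with `E[U] = 1` the level `a` equals both `k` and `1/p*`.
-/

open MeasureTheory Real Set

namespace MeasureTheory

variable {Ω : Type*} [MeasurableSpace Ω] {μ : Measure Ω}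

section SecondMoment

variable {w X : Ω → ℝ}

lemma Integrable.mul_sub_sq (hw : Integrable w μ) (hwX : Integrable (fun x => w x * X x) μ)
    (hwX2 : Integrable (fun x => w x * X x ^ 2) μ) (k : ℝ) :
    Integrable (fun x => w x * (X x - k) ^ 2) μ := by
  have hexp : (fun x => w x * (X x - k) ^ 2)
      = fun x => (w x * X x ^ 2 - 2 * k * (w x * X x)) + k ^ 2 * w x := by
    funext x; ring
  rw [hexp]
  exact (hwX2.sub (hwX.const_mul _)).add (hw.const_mul _)

lemma integral_mul_sub_sq (hw : Integrable w μ) (hwX : Integrable (fun x => w x * X x) μ)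
    (hwX2 : Integrable (fun x => w x * X x ^ 2) μ) (k : ℝ) :
    ∫ x, w x * (X x - k) ^ 2 ∂μ
      = ∫ x, w x * X x ^ 2 ∂μ - 2 * k * ∫ x, w x * X x ∂μ + k ^ 2 * ∫ x, w x ∂μ := by
  have hexp : (fun x => w x * (X x - k) ^ 2)
      = fun x => (w x * X x ^ 2 - 2 * k * (w x * X x)) + k ^ 2 * w x := by
    funext x; ring
  have hdiff : Integrable (fun x => w x * X x ^ 2 - 2 * k * (w x * X x)) μ :=
    hwX2.sub (hwX.const_mul _)
  rw [hexp, integral_add hdiff (hw.const_mul _), integral_sub hwX2 (hwX.const_mul _),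
    integral_const_mul, integral_const_mul]

variable [IsFiniteMeasure μ] in
lemma integral_sub_sq (hX : Integrable X μ) (hX2 : Integrable (fun x => X x ^ 2) μ) (k : ℝ) :
    ∫ x, (X x - k) ^ 2 ∂μ
      = ∫ x, X x ^ 2 ∂μ - 2 * k * ∫ x, X x ∂μ + k ^ 2 * μ.real univ := by
  simpa using integral_mul_sub_sq (w := fun _ => 1) (integrable_const 1) (by simpa using hX)
    (by simpa using hX2) k

lemma Integrable.mul_self_sub_sq (hX : Integrable X μ) (hX2 : Integrable (fun x => X x ^ 2) μ)
    (hX3 : Integrable (fun x => X x ^ 3) μ) (k : ℝ) :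
    Integrable (fun x => X x * (X x - k) ^ 2) μ :=
  hX.mul_sub_sq (by simpa [← sq] using hX2) (by simpa [← pow_succ'] using hX3) k

lemma integral_mul_self_sub_sq (hX : Integrable X μ) (hX2 : Integrable (fun x => X x ^ 2) μ)
    (hX3 : Integrable (fun x => X x ^ 3) μ) (k : ℝ) :
    ∫ x, X x * (X x - k) ^ 2 ∂μ
      = ∫ x, X x ^ 3 ∂μ - 2 * k * ∫ x, X x ^ 2 ∂μ + k ^ 2 * ∫ x, X x ∂μ := by
  simpa [← sq, ← pow_succ'] using
    integral_mul_sub_sq (X := X) hX (by simpa [← sq] using hX2)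
      (by simpa [← pow_succ'] using hX3) k

end SecondMoment

section TwoValued

variable {U : Ω → ℝ} {a : ℝ}

lemma integral_mul_sub_sq_eq_zero_iff (hU0 : 0 ≤ᵐ[μ] U)
    (hint : Integrable (fun x => U x * (U x - a) ^ 2) μ) :
    ∫ x, U x * (U x - a) ^ 2 ∂μ = 0 ↔ ∀ᵐ x ∂μ, U x = 0 ∨ U x = a := by
  have hnonneg : 0 ≤ᵐ[μ] fun x => U x * (U x - a) ^ 2 := by
    filter_upwards [hU0] with x hx
    exact mul_nonneg hx (sq_nonneg _)
  rw [integral_eq_zero_iff_of_nonneg_ae hnonneg hint]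
  refine Filter.eventually_congr (Filter.Eventually.of_forall fun x => ?_)
  simp [sub_eq_zero]

lemma integral_sq_eq_mul_integral_of_ae_eq_zero_or_eq (h : ∀ᵐ x ∂μ, U x = 0 ∨ U x = a) :
    ∫ x, U x ^ 2 ∂μ = a * ∫ x, U x ∂μ := by
  rw [← integral_const_mul]
  refine integral_congr_ae ?_
  filter_upwards [h] with x hx
  rcases hx with hx | hx <;> simp [hx, sq]

lemma integral_eq_mul_measureReal_pos_of_ae_eq_zero_or_eq (hUm : Measurable U)
    (hU0 : 0 ≤ᵐ[μ] U) (h : ∀ᵐ x ∂μ, U x = 0 ∨ U x = a) :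
    ∫ x, U x ∂μ = a * μ.real {x | 0 < U x} := by
  have hind : U =ᵐ[μ] {x | 0 < U x}.indicator fun _ => a := by
    filter_upwards [h, hU0] with x hx hx0
    by_cases hpos : 0 < U x
    · rw [indicator_of_mem (show x ∈ {x | 0 < U x} from hpos)]
      exact hx.resolve_left hpos.ne'
    · rw [indicator_of_notMem (show x ∉ {x | 0 < U x} from hpos)]
      exact le_antisymm (not_lt.1 hpos) hx0
  rw [integral_congr_ae hind, integral_indicator_const _ (measurableSet_lt measurable_const hUm),
    smul_eq_mul, mul_comm]

lemma ae_eq_zero_or_eq_integral_sq_div_iff (hUm : Measurable U) (hU0 : 0 ≤ᵐ[μ] U)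
    (hA : ∫ x, U x ∂μ ≠ 0) :
    (∀ᵐ x ∂μ, U x = 0 ∨ U x = (∫ x, U x ^ 2 ∂μ) / ∫ x, U x ∂μ) ↔
      ∀ᵐ x ∂μ, U x = 0 ∨ U x = (∫ x, U x ∂μ) / μ.real {x | 0 < U x} := by
  constructor
  · intro h
    have hmass := integral_eq_mul_measureReal_pos_of_ae_eq_zero_or_eq hUm hU0 h
    have hS : μ.real {x | 0 < U x} ≠ 0 := by
      intro hS; rw [hS, mul_zero] at hmass; exact hA hmass
    rwa [(div_eq_iff hS).2 hmass]
  · intro h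
    rwa [integral_sq_eq_mul_integral_of_ae_eq_zero_or_eq h, mul_div_cancel_right₀ _ hA]

end TwoValued

end MeasureTheory

/-- Strong First Law of Natural Selection: the selective acceleration
`cov(U²,U) = E[U²(U−1)]` satisfies `cov(U²,U) ≥ var(U)(1+var(U)) = var(U)·E[U²] ≥ 0`,
with equality in the first inequality iff `U ∈ {0, 1/p*}` a.e. (selective equilibrium). -/
theorem strong_first_law
    {Ω : Type*} [MeasurableSpace Ω] (μ : Measure Ω) [IsFiniteMeasure μ]
    (hN : 0 < (μ univ).toReal)
    (U : Ω → ℝ) (hUm : Measurable U) (hU0 : ∀ x, 0 ≤ U x)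
    (hU1 : (∫ x, U x ∂μ) / (μ univ).toReal = 1)
    (hU2 : Integrable (fun x => (U x) ^ 2) μ)
    (hU3 : Integrable (fun x => (U x) ^ 3) μ) :
    let N := (μ univ).toReal
    let pstar := (μ {x | 0 < U x}).toReal / N
    let v := (∫ x, (U x) ^ 2 ∂μ) / N - 1
    let c := (∫ x, (U x) ^ 2 * (U x - 1) ∂μ) / N
    c ≥ v * (1 + v) ∧
      v * (1 + v) = v * ((∫ x, (U x) ^ 2 ∂μ) / N) ∧
      v * (1 + v) ≥ 0 ∧
      (c = v * (1 + v) ↔ ∀ᵐ x ∂μ, U x = 0 ∨ U x = 1 / pstar) := by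
  intro N pstar v c
  have hU0ae : 0 ≤ᵐ[μ] U := Filter.Eventually.of_forall hU0
  have hU1int : Integrable U μ :=
    ((memLp_two_iff_integrable_sq hUm.aestronglyMeasurable).2 hU2).integrable one_le_two
  have hmass : ∫ x, U x ∂μ = N := (div_eq_one_iff_eq hN.ne').1 hU1
  have hvar_nonneg : 0 ≤ v := by
    have hexp := integral_sub_sq hU1int hU2 1
    have hN_eq : μ.real univ = N := rfl
    rw [hmass, hN_eq] at hexp
    have : 0 ≤ ∫ x, (U x - 1) ^ 2 ∂μ := integral_nonneg fun x => sq_nonneg (U x - 1)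
    rw [sub_nonneg, one_le_div hN]
    linarith
  have hgap : c - v * (1 + v) = (∫ x, U x * (U x - (1 + v)) ^ 2 ∂μ) / N := by
    have hc : ∫ x, U x ^ 2 * (U x - 1) ∂μ = ∫ x, U x ^ 3 ∂μ - ∫ x, U x ^ 2 ∂μ := by
      rw [← integral_sub hU3 hU2]; congr 1; funext x; ring
    have hN0 : N ≠ 0 := hN.ne'
    rw [integral_mul_self_sub_sq hU1int hU2 hU3, hmass]
    simp only [c, v, hc]
    field_simp
    ring
  have hgap_nonneg : 0 ≤ c - v * (1 + v) := by
    rw [hgap]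
    exact div_nonneg (integral_nonneg fun x => mul_nonneg (hU0 x) (sq_nonneg _)) hN.le
  have hlevel : 1 + v = (∫ x, U x ^ 2 ∂μ) / ∫ x, U x ∂μ := by
    rw [hmass]; simp only [v]; ring
  have hpstar : 1 / pstar = (∫ x, U x ∂μ) / μ.real {x | 0 < U x} := by
    rw [hmass]; simp only [pstar, one_div_div]; rfl
  refine ⟨sub_nonneg.1 hgap_nonneg, by ring, mul_nonneg hvar_nonneg (by linarith), ?_⟩
  rw [← sub_eq_zero, hgap, div_eq_zero_iff, or_iff_left hN.ne',
    integral_mul_sub_sq_eq_zero_iff hU0ae (hU1int.mul_self_sub_sq hU2 hU3 _), hlevel, hpstar]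
  exact ae_eq_zero_or_eq_integral_sq_div_iff hUm hU0ae (hmass ▸ hN.ne')
end

section
/- Let (Ω, μ) be a finite measure space with normalized expectation E, and let U ≥ 0 be measurable with E[U] = 1 and E[U³] < ∞. Then cov(U², U) ≥ (1/2)·var(U)², with equality if and only if U = 1 almost everywhere. -/
/-!
Complete the square with `a = var(U) / 2`: pointwise,
`(U+1)(U-(1+a))² = U²(U-1) - (U-1) - 2a(U²-1) + a²(U+1)`, and since `E[U] = 1` this integrates to
`E[(U+1)(U-(1+a))²] = cov(U², U) - var(U)² / 2`.
The left side is twice the variance of `U` under the probability density `(U+1)/2`, so it is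
nonnegative (Jensen) and vanishes only if `U` is a.e. the constant `1 + a`; that constant is
`E[U] = 1`.
-/

open MeasureTheory Real Set

section

variable {Ω : Type*} [MeasurableSpace Ω] {μ : Measure Ω}

theorem integral_div_real_univ_of_ae_eq_const {f : Ω → ℝ} {b : ℝ} (hμ : μ.real univ ≠ 0)
    (h : ∀ᵐ x ∂μ, f x = b) : (∫ x, f x ∂μ) / μ.real univ = b := by
  rw [integral_congr_ae h, integral_const, smul_eq_mul, mul_div_cancel_left₀ _ hμ]

theorem ae_eq_of_integral_mul_sq_sub_eq_zero {w f : Ω → ℝ} {b : ℝ} (hw : ∀ x, 0 < w x)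
    (hi : Integrable (fun x => w x * (f x - b) ^ 2) μ)
    (h0 : ∫ x, w x * (f x - b) ^ 2 ∂μ = 0) : ∀ᵐ x ∂μ, f x = b := by
  have hnonneg : 0 ≤ fun x => w x * (f x - b) ^ 2 := fun x => mul_nonneg (hw x).le (sq_nonneg _)
  filter_upwards [(integral_eq_zero_iff_of_nonneg hnonneg hi).mp h0] with x hx
  simpa [(hw x).ne', sub_eq_zero] using hx

section Moments

variable [IsFiniteMeasure μ] {U : Ω → ℝ} (h1 : Integrable U μ)
  (h2 : Integrable (fun x => U x ^ 2) μ) (h3 : Integrable (fun x => U x ^ 3) μ)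
include h1 h2 h3

theorem integrable_cubic (p q r s : ℝ) :
    Integrable (fun x => p * U x ^ 3 + q * U x ^ 2 + r * U x + s) μ :=
  (((h3.const_mul p).add (h2.const_mul q)).add (h1.const_mul r)).add (integrable_const s)

theorem integral_cubic (p q r s : ℝ) :
    ∫ x, (p * U x ^ 3 + q * U x ^ 2 + r * U x + s) ∂μ =
      p * ∫ x, U x ^ 3 ∂μ + q * ∫ x, U x ^ 2 ∂μ + r * ∫ x, U x ∂μ + s * μ.real univ := by
  rw [integral_add, integral_add, integral_add, integral_const_mul, integral_const_mul,
    integral_const_mul, integral_const, smul_eq_mul, mul_comm s]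
  all_goals fun_prop

theorem integrable_add_one_mul_sq_sub (a : ℝ) :
    Integrable (fun x => (U x + 1) * (U x - (1 + a)) ^ 2) μ :=
  (integrable_cubic h1 h2 h3 1 (-1 - 2 * a) (a ^ 2 - 1) ((1 + a) ^ 2)).congr
    (ae_of_all _ fun x => by ring)

theorem integral_add_one_mul_sq_sub (a : ℝ) :
    ∫ x, (U x + 1) * (U x - (1 + a)) ^ 2 ∂μ =
      ∫ x, U x ^ 2 * (U x - 1) ∂μ - 2 * a * (∫ x, U x ^ 2 ∂μ - μ.real univ)
        + a ^ 2 * (∫ x, U x ∂μ + μ.real univ) - (∫ x, U x ∂μ - μ.real univ) := by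
  have hg : ∫ x, (U x + 1) * (U x - (1 + a)) ^ 2 ∂μ =
      ∫ x, (1 * U x ^ 3 + (-1 - 2 * a) * U x ^ 2 + (a ^ 2 - 1) * U x + (1 + a) ^ 2) ∂μ := by
    congr with x; ring
  have hc : ∫ x, U x ^ 2 * (U x - 1) ∂μ =
      ∫ x, (1 * U x ^ 3 + (-1) * U x ^ 2 + 0 * U x + 0) ∂μ := by
    congr with x; ring
  rw [hg, hc, integral_cubic h1 h2 h3, integral_cubic h1 h2 h3]
  ring

end Moments

end

theorem weak_first_law_general
    {Ω : Type*} [MeasurableSpace Ω] (μ : Measure Ω) [IsFiniteMeasure μ]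
    (U : Ω → ℝ) (hUm : Measurable U) (hU0 : ∀ x, 0 ≤ U x)
    (hU1 : (∫ x, U x ∂μ) / (μ univ).toReal = 1)
    (hU2 : Integrable (fun x => (U x) ^ 2) μ)
    (hU3 : Integrable (fun x => (U x) ^ 3) μ) :
    let N := (μ univ).toReal
    let v := (∫ x, (U x) ^ 2 ∂μ) / N - 1
    let c := (∫ x, (U x) ^ 2 * (U x - 1) ∂μ) / N
    c ≥ (1 / 2) * v ^ 2 ∧
      (c = (1 / 2) * v ^ 2 ↔ ∀ᵐ x ∂μ, U x = 1) := by
  intro N v c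
  have hN : N ≠ 0 := (div_ne_zero_iff.mp (hU1 ▸ one_ne_zero)).2
  have hNpos : 0 < N := lt_of_le_of_ne ENNReal.toReal_nonneg hN.symm
  have hmean : ∫ x, U x ∂μ = N := (div_eq_one_iff_eq hN).mp hU1
  have hU : Integrable U μ :=
    ((memLp_two_iff_integrable_sq hUm.aestronglyMeasurable).mpr hU2).integrable one_le_two
  have hgap : ∫ x, (U x + 1) * (U x - (1 + v / 2)) ^ 2 ∂μ = N * (c - 1 / 2 * v ^ 2) := by
    have hcov : ∫ x, U x ^ 2 * (U x - 1) ∂μ = c * N := (div_mul_cancel₀ _ hN).symm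
    have hsq : ∫ x, U x ^ 2 ∂μ = (v + 1) * N := by rw [sub_add_cancel, div_mul_cancel₀ _ hN]
    rw [integral_add_one_mul_sq_sub hU hU2 hU3, hmean, hcov, hsq, measureReal_def]
    ring
  have hgap_nonneg : 0 ≤ ∫ x, (U x + 1) * (U x - (1 + v / 2)) ^ 2 ∂μ :=
    integral_nonneg fun x => mul_nonneg (by linarith [hU0 x]) (sq_nonneg _)
  refine ⟨?_, fun hceq => ?_, fun hU1ae => ?_⟩
  · nlinarith
  · have hconst : ∀ᵐ x ∂μ, U x = 1 + v / 2 :=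
      ae_eq_of_integral_mul_sq_sub_eq_zero (w := fun x => U x + 1) (fun x => by linarith [hU0 x])
        (integrable_add_one_mul_sq_sub hU hU2 hU3 _)
        (by rw [hgap, hceq, sub_self, mul_zero])
    have hv : v = 0 := by
      have hmean_const : (∫ x, U x ∂μ) / (μ univ).toReal = 1 + v / 2 :=
        integral_div_real_univ_of_ae_eq_const hN hconst
      linarith [hmean_const.symm.trans hU1]
    simpa [hv] using hconst
  · have hsq : (∫ x, U x ^ 2 ∂μ) / N = 1 :=
      integral_div_real_univ_of_ae_eq_const hN (hU1ae.mono fun x hx => by rw [hx, one_pow])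
    have hv : v = 0 := by simp only [v, hsq, sub_self]
    have hc : c = 0 :=
      integral_div_real_univ_of_ae_eq_const (f := fun x => U x ^ 2 * (U x - 1)) hN
        (hU1ae.mono fun x hx => by rw [hx]; norm_num)
    rw [hv, hc]; ring

/-- Weak First Law of Natural Selection: `cov(U²,U) = E[U²(U−1)] ≥ (1/2)·var(U)²`,
with equality iff `U = 1` almost everywhere (purely environmental case). -/
theorem weak_first_law
    {Ω : Type*} [MeasurableSpace Ω] (μ : Measure Ω) [IsFiniteMeasure μ]
    (hN : 0 < (μ univ).toReal)
    (U : Ω → ℝ) (hUm : Measurable U) (hU0 : ∀ x, 0 ≤ U x)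
    (hU1 : (∫ x, U x ∂μ) / (μ univ).toReal = 1)
    (hU2 : Integrable (fun x => (U x) ^ 2) μ)
    (hU3 : Integrable (fun x => (U x) ^ 3) μ) :
    let N := (μ univ).toReal
    let v := (∫ x, (U x) ^ 2 ∂μ) / N - 1
    let c := (∫ x, (U x) ^ 2 * (U x - 1) ∂μ) / N
    c ≥ (1 / 2) * v ^ 2 ∧
      (c = (1 / 2) * v ^ 2 ↔ ∀ᵐ x ∂μ, U x = 1) :=
  weak_first_law_general μ U hUm hU0 hU1 hU2 hU3
end

section
/- Let (Ω, μ) be a finite measure space with normalized expectation E and U ≥ 0 measurable with E[U] = 1, E[e^U] < ∞. Let p* = μ(U>0)/μ(Ω). Then cov(e^U, U) := E[(U−1)e^U] ≥ (1 − p*)·(e^{1/p*} − 1) ≥ 0, with equality in the first inequality when U ∈ {0, 1/p*} a.e. -/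
open MeasureTheory Real Set

/-! The part of `Ω` where `U = 0` contributes exactly `g 0` per unit of mass to `∫ g ∘ U`,
while on `{U > 0}` Jensen's inequality for the convex function `g u = (u - 1) eᵘ` bounds the
contribution from below by that of the constant `E[U | U > 0] = 1 / p*`. Equality holds when `U`
is a.e. `0` or `1 / p*`, since then `g ∘ U` is constant on both parts. -/

theorem convexOn_sub_one_mul_exp : ConvexOn ℝ (Ici (-1)) fun u => (u - 1) * exp u := by
  refine convexOn_of_hasDerivWithinAt2_nonneg (convex_Ici _)
    (f' := fun u => u * exp u) (f'' := fun u => (u + 1) * exp u) (by fun_prop)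
    (fun x _ => ?_) (fun x _ => ?_) (fun x hx => ?_)
  · exact (((hasDerivAt_id x).sub_const 1).mul (hasDerivAt_exp x)).hasDerivWithinAt.congr_deriv
      (by simp only [id]; ring)
  · exact ((hasDerivAt_id x).mul (hasDerivAt_exp x)).hasDerivWithinAt.congr_deriv
      (by simp only [id]; ring)
  · rw [interior_Ici, mem_Ioi] at hx
    have : 0 < x + 1 := by linarith
    positivity

theorem sub_one_mul_exp_two_point_div {a N : ℝ} (ha : a ≠ 0) (hN : N ≠ 0) :
    ((N - a) * ((0 - 1) * exp 0) + a * ((N / a - 1) * exp (N / a))) / N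
      = (1 - a / N) * (exp (N / a) - 1) := by
  rw [exp_zero]
  field_simp
  ring

section SplitAtZero

variable {Ω : Type*} [MeasurableSpace Ω] {μ : Measure Ω} {U : Ω → ℝ} {g : ℝ → ℝ}

theorem measure_setOf_pos_ne_zero (hU0 : ∀ x, 0 ≤ U x) (hU : Integrable U μ)
    (hpos : 0 < ∫ x, U x ∂μ) : μ {x | 0 < U x} ≠ 0 := by
  have hsupp : Function.support U = {x | 0 < U x} := by
    ext x
    simp [(hU0 x).lt_iff_ne']
  rw [← hsupp]
  exact ((integral_pos_iff_support_of_nonneg hU0 hU).mp hpos).ne'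

theorem integral_comp_eq_add_setIntegral_pos (hU : AEMeasurable U μ) (hU0 : ∀ x, 0 ≤ U x)
    (hg : Integrable (fun x => g (U x)) μ) :
    ∫ x, g (U x) ∂μ =
      μ.real {x | 0 < U x}ᶜ * g 0 + ∫ x in {x | 0 < U x}, g (U x) ∂μ := by
  have hA : NullMeasurableSet {x | 0 < U x} μ := nullMeasurableSet_lt aemeasurable_const hU
  have hzero : EqOn (fun x => g (U x)) (fun _ => g 0) {x | 0 < U x}ᶜ := fun x hx =>
    congrArg g (le_antisymm (not_lt.mp hx) (hU0 x))
  rw [← integral_add_compl₀ hA hg, setIntegral_congr_fun₀ hA.compl hzero, setIntegral_const,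
    smul_eq_mul, add_comm]

theorem integral_comp_ge_of_convexOn (hg : ConvexOn ℝ (Ici 0) g) (hgc : ContinuousOn g (Ici 0))
    [IsFiniteMeasure μ] (hU : Integrable U μ) (hU0 : ∀ x, 0 ≤ U x)
    (hgU : Integrable (fun x => g (U x)) μ) (hA : μ {x | 0 < U x} ≠ 0) :
    μ.real {x | 0 < U x}ᶜ * g 0 + μ.real {x | 0 < U x} * g ((∫ x, U x ∂μ) / μ.real {x | 0 < U x})
      ≤ ∫ x, g (U x) ∂μ := by
  have hjensen := hg.map_set_average_le hgc isClosed_Ici hA (measure_ne_top μ _)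
    (Filter.Eventually.of_forall hU0) hU.integrableOn hgU.integrableOn
  have hUA : ∫ x, U x ∂μ = ∫ x in {x | 0 < U x}, U x ∂μ := by
    simpa using integral_comp_eq_add_setIntegral_pos (g := id) hU.aemeasurable hU0 hU
  have hApos : 0 < μ.real {x | 0 < U x} := ENNReal.toReal_pos hA (measure_ne_top μ _)
  rw [setAverage_eq, setAverage_eq, smul_eq_mul, smul_eq_mul, ← hUA, inv_mul_eq_div,
    le_inv_mul_iff₀ hApos] at hjensen
  rw [integral_comp_eq_add_setIntegral_pos hU.aemeasurable hU0 hgU]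
  gcongr

theorem integral_comp_eq_of_ae_eq_zero_or_eq (hU : AEMeasurable U μ) (hU0 : ∀ x, 0 ≤ U x)
    (hgU : Integrable (fun x => g (U x)) μ) {m : ℝ} (hm : ∀ᵐ x ∂μ, U x = 0 ∨ U x = m) :
    ∫ x, g (U x) ∂μ = μ.real {x | 0 < U x}ᶜ * g 0 + μ.real {x | 0 < U x} * g m := by
  have hA : NullMeasurableSet {x | 0 < U x} μ := nullMeasurableSet_lt aemeasurable_const hU
  have hconst : ∀ᵐ x ∂μ, x ∈ {x | 0 < U x} → g (U x) = g m := by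
    filter_upwards [hm] with x hx hxA
    rcases hx with hzero | hxm
    · exact absurd hzero hxA.ne'
    · rw [hxm]
  rw [integral_comp_eq_add_setIntegral_pos hU hU0 hgU, setIntegral_congr_ae₀ hA hconst,
    setIntegral_const, smul_eq_mul]

end SplitAtZero

theorem exponential_first_law_general
    {Ω : Type*} [MeasurableSpace Ω] (μ : Measure Ω) [IsFiniteMeasure μ]
    (hN : 0 < (μ univ).toReal)
    (U : Ω → ℝ) (hU0 : ∀ x, 0 ≤ U x)
    (hU1 : (∫ x, U x ∂μ) / (μ univ).toReal = 1)
    (hcov : Integrable (fun x => (U x - 1) * Real.exp (U x)) μ) :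
    let N := (μ univ).toReal
    let pstar := (μ {x | 0 < U x}).toReal / N
    let c := (∫ x, (U x - 1) * Real.exp (U x) ∂μ) / N
    c ≥ (1 - pstar) * (Real.exp (1 / pstar) - 1) ∧
      (1 - pstar) * (Real.exp (1 / pstar) - 1) ≥ 0 ∧
      ((∀ᵐ x ∂μ, U x = 0 ∨ U x = 1 / pstar) →
        c = (1 - pstar) * (Real.exp (1 / pstar) - 1)) := by
  intro N pstar c
  have hIU : ∫ x, U x ∂μ = N := by
    rwa [div_eq_one_iff_eq hN.ne'] at hU1
  have hUi : Integrable U μ := by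
    by_contra h
    rw [integral_undef h] at hIU
    exact hN.ne hIU
  have hA : μ {x | 0 < U x} ≠ 0 := measure_setOf_pos_ne_zero hU0 hUi (hIU ▸ hN)
  have hinv : 1 / pstar = (∫ x, U x ∂μ) / μ.real {x | 0 < U x} := by
    rw [hIU, one_div_div]; rfl
  have hbound : (μ.real {x | 0 < U x}ᶜ * ((0 - 1) * exp 0)
      + μ.real {x | 0 < U x} * ((1 / pstar - 1) * exp (1 / pstar))) / N
      = (1 - pstar) * (exp (1 / pstar) - 1) := by
    rw [measureReal_compl₀ (nullMeasurableSet_lt aemeasurable_const hUi.aemeasurable), hinv, hIU]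
    exact sub_one_mul_exp_two_point_div (ENNReal.toReal_pos hA (measure_ne_top μ _)).ne' hN.ne'
  refine ⟨?_, ?_, fun hm => ?_⟩
  · rw [← hbound, hinv, ge_iff_le]
    refine div_le_div_of_nonneg_right ?_ hN.le
    exact integral_comp_ge_of_convexOn (g := fun u => (u - 1) * exp u)
      (convexOn_sub_one_mul_exp.subset (Ici_subset_Ici.mpr (by norm_num)) (convex_Ici 0))
      (by fun_prop) hUi hU0 hcov hA
  · have hp : pstar ≤ 1 := div_le_one_of_le₀ (measureReal_mono (subset_univ _)) hN.le
    have hexp_ge : 1 ≤ exp (1 / pstar) := one_le_exp (by positivity)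
    exact mul_nonneg (by linarith) (by linarith)
  · rw [← hbound]
    exact congrArg (· / N) (integral_comp_eq_of_ae_eq_zero_or_eq
      (g := fun u => (u - 1) * exp u) hUi.aemeasurable hU0 hcov hm)

/-- Selective change of the exponential observable:
`cov(e^U, U) = E[(U−1)e^U] ≥ (1−p*)(e^{1/p*} − 1) ≥ 0`, with equality in the
first inequality when `U ∈ {0, 1/p*}` a.e. (selective equilibrium). -/
theorem exponential_first_law
    {Ω : Type*} [MeasurableSpace Ω] (μ : Measure Ω) [IsFiniteMeasure μ]
    (hN : 0 < (μ univ).toReal)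
    (U : Ω → ℝ) (hUm : Measurable U) (hU0 : ∀ x, 0 ≤ U x)
    (hU1 : (∫ x, U x ∂μ) / (μ univ).toReal = 1)
    (hexp : Integrable (fun x => Real.exp (U x)) μ)
    (hcov : Integrable (fun x => (U x - 1) * Real.exp (U x)) μ) :
    let N := (μ univ).toReal
    let pstar := (μ {x | 0 < U x}).toReal / N
    let c := (∫ x, (U x - 1) * Real.exp (U x) ∂μ) / N
    c ≥ (1 - pstar) * (Real.exp (1 / pstar) - 1) ∧
      (1 - pstar) * (Real.exp (1 / pstar) - 1) ≥ 0 ∧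
      ((∀ᵐ x ∂μ, U x = 0 ∨ U x = 1 / pstar) →
        c = (1 - pstar) * (Real.exp (1 / pstar) - 1)) :=
  exponential_first_law_general μ hN U hU0 hU1 hcov
end

section
/- Let (Ω, μ) be a finite measure space with normalized expectation E, U ≥ 0 measurable with E[U] = 1 and E[|U log U|] < ∞. Define the selective entropy S_NS := E[−U log U] (with 0·log 0 := 0) and p* := μ(U>0)/μ(Ω). Then −log(1 + var(U)) ≤ S_NS ≤ log p* ≤ 0, with equality in the two nontrivial inequalities if and only if U ∈ {0, 1/p*} almost everywhere (selective equilibrium), in which case S_NS = log p* = −log(1+var(U)). -/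
open MeasureTheory Real Set

/-!
After normalizing `μ` to a probability measure, both bounds are Jensen-type inequalities.
On the childbearing set `A = {U > 0}` the conditional mean of `U` is `1 / P(A)`, and
`E[negMulLog U] = P(A) · ⨍_A negMulLog U`; strict concavity of `negMulLog` therefore bounds the
selective entropy by `P(A) · negMulLog (1 / P(A)) = log P(A)`, with equality exactly when `U` is
constant on `A`. The lower bound is Gibbs' inequality `u log (u / c) ≤ u (u / c - 1)` integrated
with `c = E[U²]`, i.e. Jensen for `-log` under the measure with density `U`.
-/

section

variable {Ω : Type*} [MeasurableSpace Ω] {μ : Measure Ω} {U : Ω → ℝ}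

lemma integral_eq_measureReal_smul_setAverage {E : Type*} [NormedAddCommGroup E]
    [NormedSpace ℝ E] [IsFiniteMeasure μ] {g : Ω → E} {s : Set Ω} (hg : ∀ x ∉ s, g x = 0) :
    ∫ x, g x ∂μ = μ.real s • ⨍ x in s, g x ∂μ := by
  rw [measure_smul_setAverage _ (measure_ne_top μ s),
    setIntegral_eq_integral_of_forall_compl_eq_zero hg]

lemma integral_comp_eq_of_ae_eq_zero_or_eq_s6 {φ : ℝ → ℝ} {c : ℝ} (hφ : φ 0 = 0)
    (h : ∀ᵐ x ∂μ, U x = 0 ∨ U x = c) : ∫ x, φ (U x) ∂μ = φ c / c * ∫ x, U x ∂μ := by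
  rw [← integral_const_mul]
  refine integral_congr_ae (h.mono fun x hx => ?_)
  by_cases hc : c = 0 <;> rcases hx with hx | hx <;> simp [hx, hc, hφ]

lemma sq_integral_le_integral_sq [IsProbabilityMeasure μ] (hU : MemLp U 2 μ) :
    (∫ x, U x ∂μ) ^ 2 ≤ ∫ x, U x ^ 2 ∂μ := by
  have := ProbabilityTheory.variance_nonneg U μ
  rw [ProbabilityTheory.variance_eq_sub hU] at this
  simpa using this

lemma mul_log_le_mul_log_add_sq_div_sub {u c : ℝ} (hu : 0 ≤ u) (hc : 0 < c) :
    u * log u ≤ u * log c + u ^ 2 / c - u := by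
  rcases hu.eq_or_lt with rfl | hu
  · simp
  have h := mul_le_mul_of_nonneg_left (log_le_sub_one_of_pos (div_pos hu hc)) hu.le
  rw [log_div hu.ne' hc.ne'] at h
  have : u * (u / c - 1) = u ^ 2 / c - u := by field_simp
  linarith

lemma neg_log_integral_sq_le_integral_negMulLog [IsProbabilityMeasure μ] (hU0 : ∀ x, 0 ≤ U x)
    (hU : MemLp U 2 μ) (hent : Integrable (fun x => negMulLog (U x)) μ)
    (hU1 : ∫ x, U x ∂μ = 1) :
    -log (∫ x, U x ^ 2 ∂μ) ≤ ∫ x, negMulLog (U x) ∂μ := by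
  set c := ∫ x, U x ^ 2 ∂μ
  have hc : 0 < c := by nlinarith [sq_integral_le_integral_sq hU]
  have hUi : Integrable U μ := hU.integrable one_le_two
  have hlin : Integrable (fun x => U x * log c + U x ^ 2 / c) μ :=
    (hUi.mul_const _).add (hU.integrable_sq.div_const _)
  have key : ∫ x, U x * log (U x) ∂μ ≤ ∫ x, (U x * log c + U x ^ 2 / c - U x) ∂μ :=
    integral_mono (by simpa [negMulLog] using hent.neg) (hlin.sub hUi)
      fun x => mul_log_le_mul_log_add_sq_div_sub (hU0 x) hc
  rw [integral_sub hlin hUi, integral_add (hUi.mul_const _) (hU.integrable_sq.div_const _),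
    integral_mul_const, integral_div, hU1, div_self hc.ne'] at key
  simp only [negMulLog, neg_mul, integral_neg]
  linarith

lemma ae_eq_zero_or_eq_or_integral_negMulLog_lt [IsProbabilityMeasure μ] (hU0 : ∀ x, 0 ≤ U x)
    (hUi : Integrable U μ) (hent : Integrable (fun x => negMulLog (U x)) μ)
    (hU1 : ∫ x, U x ∂μ = 1) :
    (∀ᵐ x ∂μ, U x = 0 ∨ U x = 1 / μ.real {x | 0 < U x}) ∨
      ∫ x, negMulLog (U x) ∂μ < log (μ.real {x | 0 < U x}) := by
  set A := {x | 0 < U x}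
  set p := μ.real A
  have hoff : ∀ x ∉ A, U x = 0 := fun x hx => le_antisymm (not_lt.1 hx) (hU0 x)
  have hmean : p * ⨍ x in A, U x ∂μ = 1 := by
    rw [← smul_eq_mul, ← integral_eq_measureReal_smul_setAverage hoff, hU1]
  have hp : 0 < p := measureReal_nonneg.lt_of_ne (left_ne_zero_of_mul_eq_one hmean).symm
  have hmeanA : ⨍ x in A, U x ∂μ = 1 / p := eq_one_div_of_mul_eq_one_right hmean
  have hentA : ∫ x, negMulLog (U x) ∂μ = p * ⨍ x in A, negMulLog (U x) ∂μ :=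
    integral_eq_measureReal_smul_setAverage fun x hx => by rw [hoff x hx, negMulLog_zero]
  have hlog : p * negMulLog (1 / p) = log p := by
    rw [negMulLog, one_div, log_inv]; field_simp
  rcases strictConcaveOn_negMulLog.ae_eq_const_or_lt_map_average (μ := μ.restrict A)
      continuous_negMulLog.continuousOn isClosed_Ici (ae_of_all _ hU0) hUi.restrict
      hent.restrict with hconst | hlt
  · left
    rw [hmeanA] at hconst
    filter_upwards [(ae_restrict_iff'₀ (nullMeasurableSet_lt aemeasurable_const
      hUi.aemeasurable)).1 hconst] with x hx
    by_cases hxA : x ∈ A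
    exacts [Or.inr (hx hxA), Or.inl (hoff x hxA)]
  · right
    rw [hentA, ← hlog, ← hmeanA]
    exact mul_lt_mul_of_pos_left hlt hp

theorem strong_gibbs_inequality_of_isProbabilityMeasure [IsProbabilityMeasure μ]
    (hU0 : ∀ x, 0 ≤ U x) (hU : MemLp U 2 μ) (hent : Integrable (fun x => negMulLog (U x)) μ)
    (hU1 : ∫ x, U x ∂μ = 1) :
    -log (∫ x, U x ^ 2 ∂μ) ≤ ∫ x, negMulLog (U x) ∂μ ∧
      ∫ x, negMulLog (U x) ∂μ ≤ log (μ.real {x | 0 < U x}) ∧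
      log (μ.real {x | 0 < U x}) ≤ 0 ∧
      ((-log (∫ x, U x ^ 2 ∂μ) = ∫ x, negMulLog (U x) ∂μ ∧
          ∫ x, negMulLog (U x) ∂μ = log (μ.real {x | 0 < U x})) ↔
        ∀ᵐ x ∂μ, U x = 0 ∨ U x = 1 / μ.real {x | 0 < U x}) := by
  set p := μ.real {x | 0 < U x}
  have hlogp : log p ≤ 0 := log_nonpos measureReal_nonneg measureReal_le_one
  have hequil (h : ∀ᵐ x ∂μ, U x = 0 ∨ U x = 1 / p) :
      ∫ x, negMulLog (U x) ∂μ = log p ∧ ∫ x, U x ^ 2 ∂μ = 1 / p := by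
    rw [integral_comp_eq_of_ae_eq_zero_or_eq_s6 negMulLog_zero h,
      integral_comp_eq_of_ae_eq_zero_or_eq_s6 (φ := (· ^ 2)) (by simp) h, hU1]
    rcases eq_or_ne p 0 with hp | hp
    · simp [hp]
    · field_simp
      simp [negMulLog, log_inv, hp]
  rcases ae_eq_zero_or_eq_or_integral_negMulLog_lt hU0 (hU.integrable one_le_two) hent hU1
    with h | h
  · obtain ⟨hS, hV⟩ := hequil h
    have hlog : -log (1 / p) = log p := by rw [one_div, log_inv, neg_neg]
    rw [hS, hV, hlog]
    exact ⟨le_rfl, le_rfl, hlogp, iff_of_true ⟨rfl, rfl⟩ h⟩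
  · exact ⟨neg_log_integral_sq_le_integral_negMulLog hU0 hU hent hU1, h.le, hlogp,
      iff_of_false (fun heq => h.ne heq.2) fun he => h.ne (hequil he).1⟩

end

theorem strong_gibbs_inequality_general
    {Ω : Type*} [MeasurableSpace Ω] (μ : Measure Ω) [IsFiniteMeasure μ]
    (U : Ω → ℝ) (hUm : Measurable U) (hU0 : ∀ x, 0 ≤ U x)
    (hU1 : (∫ x, U x ∂μ) / (μ univ).toReal = 1)
    (hU2 : Integrable (fun x => (U x) ^ 2) μ)
    (hent : Integrable (fun x => U x * Real.log (U x)) μ) :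
    let N := (μ univ).toReal
    let pstar := (μ {x | 0 < U x}).toReal / N
    let v := (∫ x, (U x) ^ 2 ∂μ) / N - 1
    let S := (∫ x, -(U x * Real.log (U x)) ∂μ) / N
    (-Real.log (1 + v) ≤ S) ∧ S ≤ Real.log pstar ∧ Real.log pstar ≤ 0 ∧
      ((-Real.log (1 + v) = S ∧ S = Real.log pstar) ↔
        ∀ᵐ x ∂μ, U x = 0 ∨ U x = 1 / pstar) := by
  intro N pstar v S
  have hμ : NeZero μ := ⟨by rintro rfl; simp at hU1⟩
  set P := (μ univ)⁻¹ • μ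
  have hfin : (μ univ)⁻¹ ≠ ⊤ := ENNReal.inv_ne_top.2 (NeZero.ne _)
  have hP (f : Ω → ℝ) : ∫ x, f x ∂P = (∫ x, f x ∂μ) / N := by
    rw [integral_smul_measure, ENNReal.toReal_inv, smul_eq_mul, inv_mul_eq_div]
  have hS : S = ∫ x, negMulLog (U x) ∂P := by
    simp only [hP, S, negMulLog, neg_mul]
  have hv : 1 + v = ∫ x, U x ^ 2 ∂P := by
    rw [hP]; ring
  have hp : pstar = P.real {x | 0 < U x} := by
    simp [P, pstar, N, measureReal_def, inv_mul_eq_div]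
  rw [hS, hv, hp,
    ← Measure.ae_ennreal_smul_measure_eq (ENNReal.inv_ne_zero.2 (measure_ne_top μ univ))]
  exact strong_gibbs_inequality_of_isProbabilityMeasure hU0
    (((memLp_two_iff_integrable_sq hUm.aestronglyMeasurable).2 hU2).smul_measure hfin)
    (by simpa [negMulLog] using hent.neg.smul_measure hfin) (by rw [hP]; exact hU1)

/-- Strong Gibbs Inequality: the selective entropy `S_NS = E[−U log U]` satisfies
`−log(1 + var(U)) ≤ S_NS ≤ log p* ≤ 0`, with equality in the two nontrivial
inequalities iff `U ∈ {0, 1/p*}` almost everywhere (selective equilibrium). -/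
theorem strong_gibbs_inequality
    {Ω : Type*} [MeasurableSpace Ω] (μ : Measure Ω) [IsFiniteMeasure μ]
    (hN : 0 < (μ univ).toReal)
    (U : Ω → ℝ) (hUm : Measurable U) (hU0 : ∀ x, 0 ≤ U x)
    (hU1 : (∫ x, U x ∂μ) / (μ univ).toReal = 1)
    (hU2 : Integrable (fun x => (U x) ^ 2) μ)
    (hent : Integrable (fun x => U x * Real.log (U x)) μ) :
    let N := (μ univ).toReal
    let pstar := (μ {x | 0 < U x}).toReal / N
    let v := (∫ x, (U x) ^ 2 ∂μ) / N - 1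
    let S := (∫ x, -(U x * Real.log (U x)) ∂μ) / N
    (-Real.log (1 + v) ≤ S) ∧ S ≤ Real.log pstar ∧ Real.log pstar ≤ 0 ∧
      ((-Real.log (1 + v) = S ∧ S = Real.log pstar) ↔
        ∀ᵐ x ∂μ, U x = 0 ∨ U x = 1 / pstar) :=
  strong_gibbs_inequality_general μ U hUm hU0 hU1 hU2 hent
end

section
/- Let (Ω, μ) be a finite measure space with normalized expectation E, U ≥ 0 measurable with E[U] = 1 and E[|U log U|] < ∞, and S_NS := E[−U log U]. Then var(U) ≥ e^{−S_NS} − 1 ≥ 1/p* − 1, where p* = μ(U>0)/μ(Ω), with equality throughout when U ∈ {0, 1/p*} a.e. -/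
open MeasureTheory Real Set

/-!
Both inequalities are integrated tangent-line bounds coming from `log z ≤ z - 1`.
With `c = E[U²]`, the bound `U log (U / c) ≤ U² / c - U` integrates to `E[U log U] ≤ log E[U²]`
(Jensen's inequality for the size-biased measure `U μ`). With `a = 1 / p*`, the bound
`U log (U / a) ≥ U - a` on `{U > 0}` integrates to `E[U log U] ≥ log a`, because `U` has
mean `1 = a p*`. Exponentiating gives both inequalities, and when `U ∈ {0, a}` a.e. the integrals
can be computed directly.
-/

namespace Real

theorem mul_log_sub_mul_log_le {u c : ℝ} (hu : 0 ≤ u) (hc : 0 < c) :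
    u * log u - u * log c ≤ u ^ 2 / c - u := by
  rcases hu.eq_or_lt with rfl | hu
  · simp
  have h := log_le_sub_one_of_pos (div_pos hu hc)
  rw [log_div hu.ne' hc.ne'] at h
  calc u * log u - u * log c = u * (log u - log c) := by ring
    _ ≤ u * (u / c - 1) := by gcongr
    _ = u ^ 2 / c - u := by field_simp

theorem sub_le_mul_log_sub_mul_log {u a : ℝ} (hu : 0 < u) (ha : 0 < a) :
    u - a ≤ u * log u - u * log a := by
  have h := log_le_sub_one_of_pos (div_pos ha hu)
  rw [log_div ha.ne' hu.ne'] at h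
  calc u - a = -(u * (a / u - 1)) := by field_simp; ring
    _ ≤ -(u * (log a - log u)) := by gcongr
    _ = u * log u - u * log a := by ring

end Real

section

variable {Ω : Type*} [MeasurableSpace Ω] {μ : Measure Ω} {U : Ω → ℝ}

theorem measureReal_pos_of_integral_pos [IsFiniteMeasure μ] (hU0 : 0 ≤ U)
    (hU : Integrable U μ) (h : 0 < ∫ x, U x ∂μ) : 0 < μ.real {x | 0 < U x} := by
  have hsupp : Function.support U = {x | 0 < U x} := by
    ext x; exact (hU0 x).lt_iff_ne'.symm
  rw [integral_pos_iff_support_of_nonneg hU0 hU, hsupp] at h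
  exact ENNReal.toReal_pos h.ne' (measure_ne_top μ _)

theorem integral_sq_pos_of_integral_pos (hU0 : 0 ≤ U) (hU : Integrable U μ)
    (hU2 : Integrable (fun x => U x ^ 2) μ) (h : 0 < ∫ x, U x ∂μ) :
    0 < ∫ x, U x ^ 2 ∂μ := by
  rw [integral_pos_iff_support_of_nonneg hU0 hU] at h
  rw [integral_pos_iff_support_of_nonneg (fun x => sq_nonneg (U x)) hU2]
  simpa [Function.support_pow] using h

theorem integral_mul_log_le_mul_log_integral_sq_div (hU0 : 0 ≤ U) (hU : Integrable U μ)
    (hU2 : Integrable (fun x => U x ^ 2) μ) (hent : Integrable (fun x => U x * log (U x)) μ)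
    (h : 0 < ∫ x, U x ∂μ) (h2 : 0 < ∫ x, U x ^ 2 ∂μ) :
    ∫ x, U x * log (U x) ∂μ ≤ (∫ x, U x ∂μ) * log ((∫ x, U x ^ 2 ∂μ) / ∫ x, U x ∂μ) := by
  set c := (∫ x, U x ^ 2 ∂μ) / ∫ x, U x ∂μ
  have hc : 0 < c := div_pos h2 h
  have hrem : Integrable (fun x => U x ^ 2 / c - U x) μ := (hU2.div_const c).sub hU
  have hbound : Integrable (fun x => U x * log c + (U x ^ 2 / c - U x)) μ :=
    (hU.mul_const _).add hrem
  calc ∫ x, U x * log (U x) ∂μ ≤ ∫ x, U x * log c + (U x ^ 2 / c - U x) ∂μ :=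
        integral_mono hent hbound fun x => by
          linarith [Real.mul_log_sub_mul_log_le (hU0 x) hc]
    _ = (∫ x, U x ∂μ) * log c := by
        rw [integral_add (hU.mul_const _) hrem,
          integral_sub (hU2.div_const c) hU, integral_mul_const, integral_div, div_div_cancel₀ h2.ne']
        ring

theorem mul_log_le_integral_mul_log [IsFiniteMeasure μ] (hU0 : 0 ≤ U) (hUm : Measurable U)
    (hU : Integrable U μ) (hent : Integrable (fun x => U x * log (U x)) μ)
    (h : 0 < ∫ x, U x ∂μ) :
    (∫ x, U x ∂μ) * log ((∫ x, U x ∂μ) / μ.real {x | 0 < U x}) ≤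
      ∫ x, U x * log (U x) ∂μ := by
  set A := {x | 0 < U x}
  have hA : MeasurableSet A := measurableSet_lt measurable_const hUm
  have hP : 0 < μ.real A := measureReal_pos_of_integral_pos hU0 hU h
  set a := (∫ x, U x ∂μ) / μ.real A
  have ha : 0 < a := div_pos h hP
  have hind : Integrable (A.indicator fun _ => a) μ := (integrable_const a).indicator hA
  have hlin : Integrable (fun x => U x * log a + U x) μ := (hU.mul_const _).add hU
  have hbound : Integrable (fun x => U x * log a + U x - A.indicator (fun _ => a) x) μ :=
    hlin.sub hind
  calc (∫ x, U x ∂μ) * log a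
      = ∫ x, U x * log a + U x - A.indicator (fun _ => a) x ∂μ := by
        rw [integral_sub hlin hind, integral_add (hU.mul_const _) hU,
          integral_mul_const, integral_indicator_const _ hA, smul_eq_mul, mul_div_cancel₀ _ hP.ne']
        ring
    _ ≤ ∫ x, U x * log (U x) ∂μ := integral_mono hbound hent fun x => by
        by_cases hx : 0 < U x
        · simp only [Set.indicator_of_mem (show x ∈ A from hx)]
          linarith [Real.sub_le_mul_log_sub_mul_log hx ha]
        · have : U x = 0 := le_antisymm (not_lt.mp hx) (hU0 x)
          simp [Set.indicator_of_notMem (show x ∉ A from hx), this]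

theorem integral_comp_of_ae_eq_zero_or {f : ℝ → ℝ} {a : ℝ} (hf : f 0 = 0) (ha : 0 < a)
    (hUm : Measurable U) (h : ∀ᵐ x ∂μ, U x = 0 ∨ U x = a) :
    ∫ x, f (U x) ∂μ = μ.real {x | 0 < U x} * f a := by
  have hcongr : (fun x => f (U x)) =ᵐ[μ] {x | 0 < U x}.indicator fun _ => f a := by
    filter_upwards [h] with x hx
    rcases hx with hx | hx <;> simp [Set.indicator, hx, hf, ha]
  rw [integral_congr_ae hcongr, integral_indicator_const _ (measurableSet_lt measurable_const hUm),
    smul_eq_mul]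

end

/-- Strong Zeroth Law: `var(U) ≥ e^{−S_NS} − 1 ≥ 1/p* − 1`, where
`S_NS = E[−U log U]` is the selective entropy, with equality throughout
when `U ∈ {0, 1/p*}` almost everywhere (selective equilibrium). -/
theorem strong_zeroth_law
    {Ω : Type*} [MeasurableSpace Ω] (μ : Measure Ω) [IsFiniteMeasure μ]
    (hN : 0 < (μ univ).toReal)
    (U : Ω → ℝ) (hUm : Measurable U) (hU0 : ∀ x, 0 ≤ U x)
    (hU1 : (∫ x, U x ∂μ) / (μ univ).toReal = 1)
    (hU2 : Integrable (fun x => (U x) ^ 2) μ)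
    (hent : Integrable (fun x => U x * Real.log (U x)) μ) :
    let N := (μ univ).toReal
    let pstar := (μ {x | 0 < U x}).toReal / N
    let v := (∫ x, (U x) ^ 2 ∂μ) / N - 1
    let S := (∫ x, -(U x * Real.log (U x)) ∂μ) / N
    (v ≥ Real.exp (-S) - 1) ∧ Real.exp (-S) - 1 ≥ 1 / pstar - 1 ∧
      ((∀ᵐ x ∂μ, U x = 0 ∨ U x = 1 / pstar) →
        v = Real.exp (-S) - 1 ∧ Real.exp (-S) - 1 = 1 / pstar - 1) := by
  intro N pstar v S
  have hmean : ∫ x, U x ∂μ = N := (div_eq_one_iff_eq hN.ne').mp hU1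
  have hU : Integrable U μ :=
    ((memLp_two_iff_integrable_sq hUm.aestronglyMeasurable).mpr hU2).integrable one_le_two
  have hpos : 0 < ∫ x, U x ∂μ := hmean ▸ hN
  set P := μ.real {x | 0 < U x}
  have hP : 0 < P := measureReal_pos_of_integral_pos hU0 hU hpos
  have hpstar : 1 / pstar = N / P := one_div_div _ _
  have hS : -S = (∫ x, U x * log (U x) ∂μ) / N := by
    simp only [S, integral_neg, neg_div, neg_neg]
  have hupper : exp (-S) ≤ (∫ x, U x ^ 2 ∂μ) / N := by
    have h2 := integral_sq_pos_of_integral_pos hU0 hU hU2 hpos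
    have h := integral_mul_log_le_mul_log_integral_sq_div hU0 hU hU2 hent hpos h2
    rw [hmean, ← div_le_iff₀' hN] at h
    rw [hS]
    exact (exp_le_exp.mpr h).trans_eq (exp_log (div_pos h2 hN))
  have hlower : N / P ≤ exp (-S) := by
    have h := mul_log_le_integral_mul_log hU0 hUm hU hent hpos
    rw [hmean, ← le_div_iff₀' hN] at h
    rw [hS]
    exact (exp_log (div_pos hN hP)).symm.trans_le (exp_le_exp.mpr h)
  refine ⟨by simp only [v]; linarith, by rw [hpstar]; linarith, fun hbin => ?_⟩
  rw [hpstar] at hbin ⊢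
  have ha : 0 < N / P := div_pos hN hP
  have hPa : P * (N / P) = N := mul_div_cancel₀ _ hP.ne'
  have hsq : ∫ x, U x ^ 2 ∂μ = P * (N / P) ^ 2 :=
    integral_comp_of_ae_eq_zero_or (f := fun u => u ^ 2) (by simp) ha hUm hbin
  have hent_eq : ∫ x, U x * log (U x) ∂μ = P * (N / P * log (N / P)) :=
    integral_comp_of_ae_eq_zero_or (f := fun u => u * log u) (by simp) ha hUm hbin
  have hexp : exp (-S) = N / P := by
    rw [hS, hent_eq, ← mul_assoc, hPa, mul_div_cancel_left₀ _ hN.ne', exp_log ha]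
  refine ⟨?_, by rw [hexp]⟩
  simp only [v, hsq, hexp]
  field_simp
end

section
/- Let (Ω, μ) be a finite measure space with normalized expectation E, and U ≥ 0 measurable with E[U] = 1 and E[|U² log U|] < ∞. Then the selective change of selective entropy ∂_NS S_NS := cov(−U log U, U) = E[−(U−1)·U·log U] satisfies ∂_NS S_NS ≤ 0, with equality if and only if U = 1 almost everywhere. -/
/-!
The integrand `(U - 1) U log U` is pointwise non-negative, since `U - 1` and `log U` have the same
sign, so `∂_NS S_NS ≤ 0`. If the mean vanishes, the integrand vanishes a.e., i.e. `U ∈ {0, 1}`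
a.e.; then `U ≤ 1` a.e. while `E[U] = 1`, which forces `U = 1` a.e.
-/

open MeasureTheory Real Set

namespace Real

lemma sub_one_mul_log_nonneg {x : ℝ} (hx : 0 ≤ x) : 0 ≤ (x - 1) * log x := by
  rcases le_total 1 x with h | h
  · exact mul_nonneg (sub_nonneg.2 h) (log_nonneg h)
  · exact mul_nonneg_of_nonpos_of_nonpos (sub_nonpos.2 h) (log_nonpos hx h)

lemma sub_one_mul_self_mul_log_nonneg {x : ℝ} (hx : 0 ≤ x) : 0 ≤ (x - 1) * x * log x := by
  rw [mul_right_comm]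
  exact mul_nonneg (sub_one_mul_log_nonneg hx) hx

lemma sub_one_mul_self_mul_log_eq_zero_iff {x : ℝ} (hx : 0 ≤ x) :
    (x - 1) * x * log x = 0 ↔ x = 0 ∨ x = 1 := by
  have hx' : x ≠ -1 := by linarith
  simp only [mul_eq_zero, sub_eq_zero, log_eq_zero, hx', or_false]
  tauto

end Real

namespace MeasureTheory

variable {α : Type*} [MeasurableSpace α] {μ : Measure α} [IsFiniteMeasure μ]

lemma ae_eq_const_of_ae_le_of_integral_eq {f : α → ℝ} {c : ℝ} (hf : Integrable f μ)
    (hle : ∀ᵐ x ∂μ, f x ≤ c) (hint : ∫ x, f x ∂μ = μ.real univ * c) : ∀ᵐ x ∂μ, f x = c :=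
  (integral_eq_iff_of_ae_le hf (integrable_const c) hle).1 (by simpa using hint)

end MeasureTheory

theorem weak_second_law_general
    {Ω : Type*} [MeasurableSpace Ω] (μ : Measure Ω) [IsFiniteMeasure μ]
    (U : Ω → ℝ) (hU0 : ∀ x, 0 ≤ U x)
    (hU1 : (∫ x, U x ∂μ) / (μ univ).toReal = 1)
    (hent1 : Integrable (fun x => U x * Real.log (U x)) μ)
    (hent2 : Integrable (fun x => (U x) ^ 2 * Real.log (U x)) μ) :
    let N := (μ univ).toReal
    let c := (∫ x, -((U x - 1) * U x * Real.log (U x)) ∂μ) / N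
    c ≤ 0 ∧ (c = 0 ↔ ∀ᵐ x ∂μ, U x = 1) := by
  intro N c
  have hN : N ≠ 0 := fun h => by simp [N, h] at hU1
  have hU : Integrable U μ := .of_integral_ne_zero fun h => by simp [h] at hU1
  have hmean : ∫ x, U x ∂μ = μ.real univ * 1 := by
    rw [mul_one, measureReal_def]
    exact (div_eq_one_iff_eq hN).1 hU1
  set g := fun x => (U x - 1) * U x * log (U x)
  have hg : Integrable g μ :=
    (hent2.sub hent1).congr (ae_of_all _ fun x => by simp only [g, Pi.sub_apply]; ring)
  have hg0 : 0 ≤ g := fun x => sub_one_mul_self_mul_log_nonneg (hU0 x)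
  have hc : c = -(∫ x, g x ∂μ) / N := by simp only [c, g, integral_neg]
  refine ⟨hc ▸ div_nonpos_of_nonpos_of_nonneg (neg_nonpos.2 (integral_nonneg hg0))
    ENNReal.toReal_nonneg, ?_⟩
  rw [hc, div_eq_zero_iff, or_iff_left hN, neg_eq_zero, integral_eq_zero_iff_of_nonneg hg0 hg]
  constructor
  · intro hg_ae
    refine ae_eq_const_of_ae_le_of_integral_eq hU ?_ hmean
    filter_upwards [hg_ae] with x hx
    rcases (sub_one_mul_self_mul_log_eq_zero_iff (hU0 x)).1 hx with h | h <;> simp [h]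
  · intro hU_ae
    filter_upwards [hU_ae] with x hx
    simp [g, hx]

/-- Weak Second Law of Natural Selection: the selective change of selective entropy
`∂_NS S_NS = cov(−U log U, U) = E[−(U−1)·U·log U]` is non-positive, with equality
iff `U = 1` almost everywhere (purely environmental case). -/
theorem weak_second_law
    {Ω : Type*} [MeasurableSpace Ω] (μ : Measure Ω) [IsFiniteMeasure μ]
    (hN : 0 < (μ univ).toReal)
    (U : Ω → ℝ) (hUm : Measurable U) (hU0 : ∀ x, 0 ≤ U x)
    (hU1 : (∫ x, U x ∂μ) / (μ univ).toReal = 1)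
    (hent1 : Integrable (fun x => U x * Real.log (U x)) μ)
    (hent2 : Integrable (fun x => (U x) ^ 2 * Real.log (U x)) μ) :
    let N := (μ univ).toReal
    let c := (∫ x, -((U x - 1) * U x * Real.log (U x)) ∂μ) / N
    c ≤ 0 ∧ (c = 0 ↔ ∀ᵐ x ∂μ, U x = 1) :=
  weak_second_law_general μ U hU0 hU1 hent1 hent2
end

section
/- Let (Ω, μ) be a finite measure space with normalized expectation E, U ≥ 0 measurable with E[U] = 1 and E[|U² log U|] < ∞. Let S_NS = E[−U log U] and v = var(U) = E[U²] − 1. Then the chain of inequalities holds: cov(−U log U, U) ≤ −v·log(1+v) ≤ v·S_NS ≤ (e^{−S_NS} − 1)·S_NS ≤ −(1/p* − 1)·log(1/p*) ≤ 0, where p* = μ(U>0)/μ(Ω); all but the last inequality are saturated when U ∈ {0, 1/p*} a.e. -/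
/-! Normalising `μ` to a probability measure makes `U` a probability density, and the Strong
Gibbs inequalities `log (1/p*) ≤ E[U log U] ≤ log E[U²]` together with
`E[U²] log E[U²] ≤ E[U² log U]` are Jensen's inequality for the measure `U dμ` (for `log`,
restricted to `{U > 0}`, and for `x log x`); each is obtained by integrating a tangent-line
bound. As `cov(−U log U, U) = −E[U² log U] − S`, the first inequality follows. The others are
real-variable consequences of `−log (1 + v) ≤ S ≤ −log (1/p*)`, which give `S ≤ 0` and
`1/p* ≤ exp (−S) ≤ 1 + v`, combined with the monotonicity of `(x − 1) log x` on `[1, ∞)`.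
When `U ∈ {0, 1/p*}` a.e., all the quantities are explicit functions of `1/p*`. -/

open MeasureTheory Real Set

theorem mul_one_add_log_sub_le_mul_log {x a : ℝ} (hx : 0 ≤ x) (ha : 0 < a) :
    x * (1 + log a) - a ≤ x * log x := by
  rcases hx.eq_or_lt with rfl | hx
  · simpa using ha.le
  · have h := mul_le_mul_of_nonneg_left (log_le_sub_one_of_pos (div_pos ha hx)) hx.le
    rw [log_div ha.ne' hx.ne', mul_sub_one, mul_div_cancel₀ a hx.ne'] at h
    linarith

theorem mul_log_le_sq_div_sub_add_mul_log {x a : ℝ} (hx : 0 ≤ x) (ha : 0 < a) :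
    x * log x ≤ x ^ 2 / a - x + x * log a := by
  rcases hx.eq_or_lt with rfl | hx
  · simp
  · have h := mul_le_mul_of_nonneg_left (log_le_sub_one_of_pos (div_pos hx ha)) hx.le
    rw [log_div hx.ne' ha.ne'] at h
    calc x * log x = x * (log x - log a) + x * log a := by ring
      _ ≤ x * (x / a - 1) + x * log a := by gcongr
      _ = x ^ 2 / a - x + x * log a := by ring

theorem sub_one_mul_log_le_sub_one_mul_log {x y : ℝ} (hx : 1 ≤ x) (hxy : x ≤ y) :
    (x - 1) * log x ≤ (y - 1) * log y :=
  mul_le_mul (by linarith) (log_le_log (by linarith) hxy) (log_nonneg hx) (by linarith)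

theorem second_law_chain_of_gibbs_bounds {v S q : ℝ} (hv : 0 ≤ v) (hq : 1 ≤ q)
    (hlow : -log (1 + v) ≤ S) (hup : S ≤ -log q) :
    -v * log (1 + v) ≤ v * S ∧ v * S ≤ (exp (-S) - 1) * S ∧
      (exp (-S) - 1) * S ≤ -(q - 1) * log q ∧ -(q - 1) * log q ≤ 0 := by
  have hS : S ≤ 0 := hup.trans (neg_nonpos.2 (log_nonneg hq))
  have hexp : exp (-S) ≤ 1 + v := by
    rw [← exp_log (by linarith : 0 < 1 + v)]; exact exp_le_exp.2 (by linarith)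
  have hqexp : q ≤ exp (-S) := by
    rw [← exp_log (by linarith : 0 < q)]; exact exp_le_exp.2 (by linarith)
  refine ⟨?_, mul_le_mul_of_nonpos_right (by linarith) hS, ?_, ?_⟩
  · have := mul_le_mul_of_nonneg_left hlow hv
    linarith
  · have h := sub_one_mul_log_le_sub_one_mul_log hq hqexp
    rw [log_exp] at h
    linarith
  · have := mul_nonneg (sub_nonneg.2 hq) (log_nonneg hq)
    linarith

section Density

variable {Ω : Type*} [MeasurableSpace Ω] {μ : Measure Ω} {U : Ω → ℝ}

theorem measureReal_setOf_pos_pos_of_integral_pos [IsFiniteMeasure μ] (hU0 : ∀ x, 0 ≤ U x)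
    (hU : 0 < ∫ x, U x ∂μ) : 0 < μ.real {x | 0 < U x} := by
  have hsupp : Function.support U = {x | 0 < U x} := by
    ext x; simp [(hU0 x).lt_iff_ne, eq_comm]
  rw [integral_pos_iff_support_of_nonneg hU0 (.of_integral_ne_zero hU.ne'), hsupp] at hU
  exact ENNReal.toReal_pos hU.ne' (measure_ne_top μ _)

theorem log_one_div_measureReal_setOf_pos_le_integral_mul_log [IsFiniteMeasure μ]
    (hUm : Measurable U) (hU0 : ∀ x, 0 ≤ U x) (hU1 : ∫ x, U x ∂μ = 1)
    (hent : Integrable (fun x => U x * log (U x)) μ) :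
    log (1 / μ.real {x | 0 < U x}) ≤ ∫ x, U x * log (U x) ∂μ := by
  set A := {x | 0 < U x}
  have hA : MeasurableSet A := measurableSet_lt measurable_const hUm
  have hp : 0 < μ.real A :=
    measureReal_setOf_pos_pos_of_integral_pos hU0 (by rw [hU1]; exact one_pos)
  set a := 1 / μ.real A
  have hU : Integrable U μ := .of_integral_ne_zero (by rw [hU1]; exact one_ne_zero)
  have hlin : Integrable (fun x => U x * (1 + log a) - A.indicator (fun _ => a) x) μ :=
    (hU.mul_const _).sub ((integrable_const a).indicator hA)
  calc log a = ∫ x, U x * (1 + log a) - A.indicator (fun _ => a) x ∂μ := by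
        rw [integral_sub (hU.mul_const _) ((integrable_const a).indicator hA), integral_mul_const,
          hU1, integral_indicator_const _ hA, smul_eq_mul, mul_one_div_cancel hp.ne']
        ring
    _ ≤ ∫ x, U x * log (U x) ∂μ := by
        refine integral_mono hlin hent fun x => ?_
        by_cases hx : x ∈ A
        · simpa [indicator_of_mem hx] using mul_one_add_log_sub_le_mul_log hx.le (by positivity)
        · simp [indicator_of_notMem hx, le_antisymm (not_lt.1 hx) (hU0 x)]

theorem integral_mul_log_le_log_integral_sq (hU0 : ∀ x, 0 ≤ U x) (hU1 : ∫ x, U x ∂μ = 1)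
    (hU2 : Integrable (fun x => U x ^ 2) μ) (hent : Integrable (fun x => U x * log (U x)) μ)
    (hm : 0 < ∫ x, U x ^ 2 ∂μ) :
    ∫ x, U x * log (U x) ∂μ ≤ log (∫ x, U x ^ 2 ∂μ) := by
  set m := ∫ x, U x ^ 2 ∂μ
  have hU : Integrable U μ := .of_integral_ne_zero (by rw [hU1]; exact one_ne_zero)
  have hdiff : Integrable (fun x => U x ^ 2 / m - U x) μ := (hU2.div_const m).sub hU
  calc ∫ x, U x * log (U x) ∂μ ≤ ∫ x, U x ^ 2 / m - U x + U x * log m ∂μ :=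
        integral_mono hent (hdiff.add (hU.mul_const _))
          fun x => mul_log_le_sq_div_sub_add_mul_log (hU0 x) hm
    _ = log m := by
        rw [integral_add hdiff (hU.mul_const _), integral_sub (hU2.div_const m) hU,
          integral_div, integral_mul_const, hU1, div_self hm.ne']
        ring

theorem mul_log_integral_sq_le_integral_sq_mul_log (hU0 : ∀ x, 0 ≤ U x)
    (hU1 : ∫ x, U x ∂μ = 1) (hU2 : Integrable (fun x => U x ^ 2) μ)
    (hent : Integrable (fun x => U x ^ 2 * log (U x)) μ) (hm : 0 < ∫ x, U x ^ 2 ∂μ) :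
    (∫ x, U x ^ 2 ∂μ) * log (∫ x, U x ^ 2 ∂μ) ≤ ∫ x, U x ^ 2 * log (U x) ∂μ := by
  set m := ∫ x, U x ^ 2 ∂μ
  have hU : Integrable U μ := .of_integral_ne_zero (by rw [hU1]; exact one_ne_zero)
  calc m * log m = ∫ x, U x ^ 2 * (1 + log m) - m * U x ∂μ := by
        rw [integral_sub (hU2.mul_const _) (hU.const_mul m), integral_mul_const, integral_const_mul,
          hU1]
        ring
    _ ≤ ∫ x, U x ^ 2 * log (U x) ∂μ :=
        integral_mono ((hU2.mul_const _).sub (hU.const_mul m)) hent fun x => by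
          have h := mul_le_mul_of_nonneg_left (mul_one_add_log_sub_le_mul_log (hU0 x) hm) (hU0 x)
          linarith

theorem integral_comp_eq_of_ae_eq_zero_or (hUm : Measurable U) {a : ℝ} (ha : 0 < a)
    (hae : ∀ᵐ x ∂μ, U x = 0 ∨ U x = a) {g : ℝ → ℝ} (hg : g 0 = 0) :
    ∫ x, g (U x) ∂μ = μ.real {x | 0 < U x} * g a := by
  rw [← smul_eq_mul, ← integral_indicator_const _ (measurableSet_lt measurable_const hUm)]
  refine integral_congr_ae (hae.mono fun x hx => ?_)
  rcases hx with h | h <;> simp [h, ha, hg]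

theorem integrals_eq_of_ae_eq_zero_or (hUm : Measurable U) {q : ℝ} (hq : 0 < q)
    (hpq : μ.real {x | 0 < U x} * q = 1) (hae : ∀ᵐ x ∂μ, U x = 0 ∨ U x = q) :
    ∫ x, U x ^ 2 ∂μ = q ∧ ∫ x, -(U x * log (U x)) ∂μ = -log q ∧
      ∫ x, -(U x * log (U x)) * (U x - 1) ∂μ = -(q - 1) * log q := by
  have hval {g : ℝ → ℝ} (hg : g 0 = 0) : ∫ x, g (U x) ∂μ = μ.real {x | 0 < U x} * g q :=
    integral_comp_eq_of_ae_eq_zero_or hUm hq hae hg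
  refine ⟨?_, ?_, ?_⟩
  · rw [hval (g := fun u => u ^ 2) (by simp)]
    linear_combination q * hpq
  · rw [hval (g := fun u => -(u * log u)) (by simp)]
    linear_combination -log q * hpq
  · rw [hval (g := fun u => -(u * log u) * (u - 1)) (by simp)]
    linear_combination -(q - 1) * log q * hpq

theorem strong_second_law_of_isProbabilityMeasure [IsProbabilityMeasure μ] (hUm : Measurable U)
    (hU0 : ∀ x, 0 ≤ U x) (hU1 : ∫ x, U x ∂μ = 1) (hU2 : Integrable (fun x => U x ^ 2) μ)
    (hent1 : Integrable (fun x => U x * log (U x)) μ)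
    (hent2 : Integrable (fun x => U x ^ 2 * log (U x)) μ) :
    let p := μ.real {x | 0 < U x}
    let v := ∫ x, U x ^ 2 ∂μ - 1
    let S := ∫ x, -(U x * log (U x)) ∂μ
    let c := ∫ x, -(U x * log (U x)) * (U x - 1) ∂μ
    c ≤ -v * log (1 + v) ∧
      -v * log (1 + v) ≤ v * S ∧
      v * S ≤ (exp (-S) - 1) * S ∧
      (exp (-S) - 1) * S ≤ -(1 / p - 1) * log (1 / p) ∧
      -(1 / p - 1) * log (1 / p) ≤ 0 ∧
      ((∀ᵐ x ∂μ, U x = 0 ∨ U x = 1 / p) →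
        (c = -v * log (1 + v) ∧
          -v * log (1 + v) = v * S ∧
          v * S = (exp (-S) - 1) * S ∧
          (exp (-S) - 1) * S = -(1 / p - 1) * log (1 / p))) := by
  intro p v S c
  have hp : 0 < p := measureReal_setOf_pos_pos_of_integral_pos hU0 (by rw [hU1]; exact one_pos)
  have hv : 0 ≤ v := by
    have h := ProbabilityTheory.variance_nonneg U μ
    rw [ProbabilityTheory.variance_eq_sub
      ((memLp_two_iff_integrable_sq hUm.aestronglyMeasurable).2 hU2)] at h
    simpa [v, hU1] using h
  have hm1 : 1 + v = ∫ x, U x ^ 2 ∂μ := add_sub_cancel _ _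
  have hm : 0 < ∫ x, U x ^ 2 ∂μ := by linarith
  have hS : S = -∫ x, U x * log (U x) ∂μ := integral_neg _
  have hc : c = -∫ x, U x ^ 2 * log (U x) ∂μ + ∫ x, U x * log (U x) ∂μ := by
    rw [← integral_neg, ← integral_add (f := fun x => -(U x ^ 2 * log (U x))) hent2.neg hent1]
    exact integral_congr_ae (.of_forall fun x => by ring)
  have hlow : -log (1 + v) ≤ S := by
    rw [hS, hm1]; exact neg_le_neg (integral_mul_log_le_log_integral_sq hU0 hU1 hU2 hent1 hm)
  have hup : S ≤ -log (1 / p) := by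
    rw [hS]
    exact neg_le_neg (log_one_div_measureReal_setOf_pos_le_integral_mul_log hUm hU0 hU1 hent1)
  have hjensen : (1 + v) * log (1 + v) ≤ ∫ x, U x ^ 2 * log (U x) ∂μ := by
    rw [hm1]; exact mul_log_integral_sq_le_integral_sq_mul_log hU0 hU1 hU2 hent2 hm
  obtain ⟨h2, h3, h4, h5⟩ := second_law_chain_of_gibbs_bounds hv
    (one_le_one_div hp measureReal_le_one) hlow hup
  refine ⟨?_, h2, h3, h4, h5, fun hae => ?_⟩
  · rw [hc]
    linarith
  · have hq : 0 < 1 / p := one_div_pos.2 hp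
    obtain ⟨hsq, hent, hcov⟩ :=
      integrals_eq_of_ae_eq_zero_or hUm hq (mul_one_div_cancel hp.ne') hae
    simp only [v, S, c, hsq, hent, hcov, add_sub_cancel, neg_neg, exp_log hq, true_and]
    constructor <;> ring

end Density

theorem strong_second_law_general
    {Ω : Type*} [MeasurableSpace Ω] (μ : Measure Ω) [IsFiniteMeasure μ]
    (U : Ω → ℝ) (hUm : Measurable U) (hU0 : ∀ x, 0 ≤ U x)
    (hU1 : (∫ x, U x ∂μ) / (μ univ).toReal = 1)
    (hU2 : Integrable (fun x => (U x) ^ 2) μ)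
    (hent1 : Integrable (fun x => U x * Real.log (U x)) μ)
    (hent2 : Integrable (fun x => (U x) ^ 2 * Real.log (U x)) μ) :
    let N := (μ univ).toReal
    let pstar := (μ {x | 0 < U x}).toReal / N
    let v := (∫ x, (U x) ^ 2 ∂μ) / N - 1
    let S := (∫ x, -(U x * Real.log (U x)) ∂μ) / N
    let c := (∫ x, -(U x * Real.log (U x)) * (U x - 1) ∂μ) / N
    c ≤ -v * Real.log (1 + v) ∧
      -v * Real.log (1 + v) ≤ v * S ∧
      v * S ≤ (Real.exp (-S) - 1) * S ∧
      (Real.exp (-S) - 1) * S ≤ -(1 / pstar - 1) * Real.log (1 / pstar) ∧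
      -(1 / pstar - 1) * Real.log (1 / pstar) ≤ 0 ∧
      ((∀ᵐ x ∂μ, U x = 0 ∨ U x = 1 / pstar) →
        (c = -v * Real.log (1 + v) ∧
          -v * Real.log (1 + v) = v * S ∧
          v * S = (Real.exp (-S) - 1) * S ∧
          (Real.exp (-S) - 1) * S = -(1 / pstar - 1) * Real.log (1 / pstar))) := by
  intro N pstar v S c
  have hμ : μ univ ≠ 0 := fun h => by simp [h] at hU1
  have : NeZero μ := ⟨fun h => hμ (by simp [h])⟩
  have hint {f : Ω → ℝ} (hf : Integrable f μ) : Integrable f ((μ univ)⁻¹ • μ) :=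
    hf.smul_measure (ENNReal.inv_ne_top.2 hμ)
  have havg (f : Ω → ℝ) : ∫ x, f x ∂((μ univ)⁻¹ • μ) = (∫ x, f x ∂μ) / N := by
    rw [integral_smul_measure, ENNReal.toReal_inv, smul_eq_mul, inv_mul_eq_div]
  have hp : (((μ univ)⁻¹ • μ).real {x | 0 < U x}) = pstar := by
    rw [measureReal_ennreal_smul_apply, ENNReal.toReal_inv, inv_mul_eq_div]
    rfl
  have key := strong_second_law_of_isProbabilityMeasure hUm hU0 ((havg U).trans hU1) (hint hU2)
    (hint hent1) (hint hent2)
  simp only [havg, hp,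
    Measure.ae_ennreal_smul_measure_iff (ENNReal.inv_ne_zero.2 (measure_ne_top μ univ))] at key
  exact key

/-- Strong Second Law of Natural Selection: with `v = var(U)`, `S = S_NS = E[−U log U]`
and `p* = μ(U>0)/N`, the chain holds:
`cov(−U log U, U) ≤ −v log(1+v) ≤ v·S ≤ (e^{−S}−1)·S ≤ −(1/p*−1)·log(1/p*) ≤ 0`,
and all but the last inequality are saturated when `U ∈ {0, 1/p*}` a.e. -/
theorem strong_second_law
    {Ω : Type*} [MeasurableSpace Ω] (μ : Measure Ω) [IsFiniteMeasure μ]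
    (hN : 0 < (μ univ).toReal)
    (U : Ω → ℝ) (hUm : Measurable U) (hU0 : ∀ x, 0 ≤ U x)
    (hU1 : (∫ x, U x ∂μ) / (μ univ).toReal = 1)
    (hU2 : Integrable (fun x => (U x) ^ 2) μ)
    (hent1 : Integrable (fun x => U x * Real.log (U x)) μ)
    (hent2 : Integrable (fun x => (U x) ^ 2 * Real.log (U x)) μ) :
    let N := (μ univ).toReal
    let pstar := (μ {x | 0 < U x}).toReal / N
    let v := (∫ x, (U x) ^ 2 ∂μ) / N - 1
    let S := (∫ x, -(U x * Real.log (U x)) ∂μ) / N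
    let c := (∫ x, -(U x * Real.log (U x)) * (U x - 1) ∂μ) / N
    c ≤ -v * Real.log (1 + v) ∧
      -v * Real.log (1 + v) ≤ v * S ∧
      v * S ≤ (Real.exp (-S) - 1) * S ∧
      (Real.exp (-S) - 1) * S ≤ -(1 / pstar - 1) * Real.log (1 / pstar) ∧
      -(1 / pstar - 1) * Real.log (1 / pstar) ≤ 0 ∧
      ((∀ᵐ x ∂μ, U x = 0 ∨ U x = 1 / pstar) →
        (c = -v * Real.log (1 + v) ∧
          -v * Real.log (1 + v) = v * S ∧
          v * S = (Real.exp (-S) - 1) * S ∧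
          (Real.exp (-S) - 1) * S = -(1 / pstar - 1) * Real.log (1 / pstar))) :=
  strong_second_law_general μ U hUm hU0 hU1 hU2 hent1 hent2
end

section
/- Let (Ω, μ) be a finite measure space with normalized expectation E, U ≥ 0 with E[U] = 1 and E[|U^{2+c'} log U|] < ∞ for some c' > 0. Then cov(−U log U, U) ≥ log(1/p*) − E[U² log U], where p* = μ(U>0)/μ(Ω), with equality when U ∈ {0, 1/p*} almost everywhere. -/
/-!
Since `cov(-U log U, U) = E[U log U] - E[U² log U]`, the claim reduces to `E[U log U] ≥ -log p*`.
On the set `{U > 0}`, of relative mass `p*`, the mean of `U` is `1/p*`, so Jensen's inequality for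
the convex function `x log x` gives exactly this bound; it is an equality when `U` is constant on
that set.
-/

open MeasureTheory Real Set

section MulLog

variable {α : Type*} [MeasurableSpace α] {μ : Measure α} {f : α → ℝ}

theorem measure_pos_set_ne_zero_of_integral_pos (hf0 : ∀ x, 0 ≤ f x) (h : 0 < ∫ x, f x ∂μ) :
    μ {x | 0 < f x} ≠ 0 := by
  intro h0
  have hf : f =ᵐ[μ] 0 := by
    filter_upwards [measure_eq_zero_iff_ae_notMem.mp h0] with x hx
    exact le_antisymm (not_lt.mp hx) (hf0 x)
  simp [integral_congr_ae hf] at h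

theorem integral_mul_log_div_measureReal_pos_le (hf0 : ∀ x, 0 ≤ f x) (hf : Integrable f μ)
    (hflog : Integrable (fun x => f x * log (f x)) μ)
    (hμ : μ {x | 0 < f x} ≠ 0) (hμ' : μ {x | 0 < f x} ≠ ⊤) :
    (∫ x, f x ∂μ) * log ((∫ x, f x ∂μ) / μ.real {x | 0 < f x}) ≤ ∫ x, f x * log (f x) ∂μ := by
  set s := {x | 0 < f x}
  have hs : 0 < μ.real s := ENNReal.toReal_pos hμ hμ'
  have off : ∀ x ∉ s, f x = 0 := fun x hx => le_antisymm (not_lt.mp hx) (hf0 x)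
  have jensen := convexOn_mul_log.map_set_average_le continuous_mul_log.continuousOn isClosed_Ici
    hμ hμ' (Filter.Eventually.of_forall fun x => hf0 x) hf.integrableOn hflog.integrableOn
  rwa [setAverage_eq, setAverage_eq, smul_eq_mul, smul_eq_mul,
    setIntegral_eq_integral_of_forall_compl_eq_zero off,
    setIntegral_eq_integral_of_forall_compl_eq_zero fun x hx => by simp [off x hx],
    inv_mul_eq_div, inv_mul_eq_div, div_mul_eq_mul_div, div_le_div_iff_of_pos_right hs] at jensen

theorem integral_mul_log_of_ae_eq_zero_or_eq {m : ℝ} (h : ∀ᵐ x ∂μ, f x = 0 ∨ f x = m) :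
    ∫ x, f x * log (f x) ∂μ = (∫ x, f x ∂μ) * log m := by
  rw [← integral_mul_const]
  refine integral_congr_ae ?_
  filter_upwards [h] with x hx
  rcases hx with hx | hx <;> simp [hx]

end MulLog

theorem selective_speed_limit_general
    {Ω : Type*} [MeasurableSpace Ω] (μ : Measure Ω) [IsFiniteMeasure μ]
    (hN : 0 < (μ univ).toReal)
    (U : Ω → ℝ) (hU0 : ∀ x, 0 ≤ U x)
    (hU1 : (∫ x, U x ∂μ) / (μ univ).toReal = 1)
    (hent1 : Integrable (fun x => U x * Real.log (U x)) μ)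
    (hent2 : Integrable (fun x => (U x) ^ 2 * Real.log (U x)) μ) :
    let N := (μ univ).toReal
    let pstar := (μ {x | 0 < U x}).toReal / N
    let c := (∫ x, -(U x * Real.log (U x)) * (U x - 1) ∂μ) / N
    c ≥ Real.log (1 / pstar) - (∫ x, (U x) ^ 2 * Real.log (U x) ∂μ) / N ∧
      ((∀ᵐ x ∂μ, U x = 0 ∨ U x = 1 / pstar) →
        c = Real.log (1 / pstar) - (∫ x, (U x) ^ 2 * Real.log (U x) ∂μ) / N) := by
  intro N pstar c
  have hIU : ∫ x, U x ∂μ = N := (div_eq_one_iff_eq hN.ne').mp hU1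
  have hU : Integrable U μ := .of_integral_ne_zero (hIU ▸ hN.ne')
  have hpstar : 1 / pstar = N / μ.real {x | 0 < U x} := one_div_div _ _
  have hcov : c = ((∫ x, U x * log (U x) ∂μ) - ∫ x, U x ^ 2 * log (U x) ∂μ) / N := by
    rw [← integral_sub hent1 hent2]
    exact congrArg (· / N) (integral_congr_ae (.of_forall fun x => by ring))
  rw [hcov, sub_div, hpstar]
  constructor
  · have jensen := integral_mul_log_div_measureReal_pos_le hU0 hU hent1
      (measure_pos_set_ne_zero_of_integral_pos hU0 (hIU ▸ hN)) (measure_ne_top μ _)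
    rw [hIU, ← le_div_iff₀' hN] at jensen
    linarith
  · intro hbin
    rw [integral_mul_log_of_ae_eq_zero_or_eq (hpstar ▸ hbin), hIU, hpstar,
      mul_div_cancel_left₀ _ hN.ne']

/-- Infinitary selective speed limit: `cov(−U log U, U) ≥ log(1/p*) − E[U² log U]`,
with equality when `U ∈ {0, 1/p*}` almost everywhere (selective equilibrium). -/
theorem selective_speed_limit
    {Ω : Type*} [MeasurableSpace Ω] (μ : Measure Ω) [IsFiniteMeasure μ]
    (hN : 0 < (μ univ).toReal)
    (U : Ω → ℝ) (hUm : Measurable U) (hU0 : ∀ x, 0 ≤ U x)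
    (hU1 : (∫ x, U x ∂μ) / (μ univ).toReal = 1)
    (c' : ℝ) (hc' : 0 < c')
    (hmom : Integrable (fun x => U x ^ ((2 : ℝ) + c') * Real.log (U x)) μ)
    (hent1 : Integrable (fun x => U x * Real.log (U x)) μ)
    (hent2 : Integrable (fun x => (U x) ^ 2 * Real.log (U x)) μ) :
    let N := (μ univ).toReal
    let pstar := (μ {x | 0 < U x}).toReal / N
    let c := (∫ x, -(U x * Real.log (U x)) * (U x - 1) ∂μ) / N
    c ≥ Real.log (1 / pstar) - (∫ x, (U x) ^ 2 * Real.log (U x) ∂μ) / N ∧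
      ((∀ᵐ x ∂μ, U x = 0 ∨ U x = 1 / pstar) →
        c = Real.log (1 / pstar) - (∫ x, (U x) ^ 2 * Real.log (U x) ∂μ) / N) :=
  selective_speed_limit_general μ hN U hU0 hU1 hent1 hent2
end

section
/- Let w : μ ↦ μ' and w' : μ' ↦ μ'' be composable finite-variance evolutionary processes with relative fitnesses U and U'. If the pair (w, w') is weakly stationary, that is ⟨U'⟩_w(i) = U(i) for μ-almost every i, then U = 1 μ-a.e. (w is purely environmental) and ⟨U'⟩_w = 1 μ-a.e. Conversely, if U = 1 a.e. and ⟨U'⟩_w = 1 a.e., then the pair is weakly stationary. -/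
open MeasureTheory Real Set

/-!
Write `N, N', N''` for the total masses. Since `μ' = ∫ w i dμ(i)`, the relative fitness
`U = w(·)(univ) / (N'/N)` has `∫ U dμ = N`, and `∫ U ⟨U'⟩_w dμ = (N/N') ∫ U' dμ' = N`.
Under weak stationarity the second moment `∫ U² dμ` equals this cross moment, so
`∫ (U - 1)² dμ = N - 2N + N = 0`.
-/

namespace MeasureTheory

variable {α β γ : Type*} [MeasurableSpace α] [MeasurableSpace β] [MeasurableSpace γ]

theorem Measure.eq_bind_of_forall_measurableSet {μ : Measure α} {κ : α → Measure β}
    {ν : Measure β} (hκ : Measurable κ)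
    (h : ∀ s : Set β, MeasurableSet s → ν s = ∫⁻ a, κ a s ∂μ) : ν = μ.bind κ :=
  Measure.ext fun s hs => by rw [h s hs, Measure.bind_apply hs hκ.aemeasurable]

theorem Measure.lintegral_measure_univ_ne_top_of_bind {μ : Measure α} {κ : α → Measure β}
    [IsFiniteMeasure (μ.bind κ)] (hκ : Measurable κ) : ∫⁻ a, κ a univ ∂μ ≠ ⊤ := by
  rw [← Measure.bind_apply .univ hκ.aemeasurable]
  exact measure_ne_top _ _

theorem Measure.integral_integral_bind_of_nonneg {μ : Measure α} {κ : α → Measure β}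
    (hκ : Measurable κ) {f : β → ℝ} (hf0 : 0 ≤ f) (hfm : Measurable f)
    (hfi : Integrable f (μ.bind κ)) :
    ∫ a, ∫ b, f b ∂κ a ∂μ = ∫ b, f b ∂μ.bind κ := by
  have hlin (ν : Measure β) : ∫ b, f b ∂ν = (∫⁻ b, ENNReal.ofReal (f b) ∂ν).toReal :=
    integral_eq_lintegral_of_nonneg_ae (.of_forall hf0) hfm.aestronglyMeasurable
  have hinner : Measurable fun a => ∫⁻ b, ENNReal.ofReal (f b) ∂κ a :=
    (Measure.measurable_lintegral hfm.ennreal_ofReal).comp hκ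
  have hbind : ∫⁻ b, ENNReal.ofReal (f b) ∂μ.bind κ =
      ∫⁻ a, ∫⁻ b, ENNReal.ofReal (f b) ∂κ a ∂μ :=
    Measure.lintegral_bind hκ.aemeasurable hfm.ennreal_ofReal.aemeasurable
  have hfin : ∫⁻ b, ENNReal.ofReal (f b) ∂μ.bind κ ≠ ⊤ :=
    ((hasFiniteIntegral_iff_ofReal (.of_forall hf0)).mp hfi.hasFiniteIntegral).ne
  simp only [hlin]
  rw [integral_toReal hinner.aemeasurable (ae_lt_top hinner (hbind ▸ hfin)), hbind]

theorem Measure.integral_toReal_measure_univ_eq_bind {μ : Measure α} {κ : α → Measure β}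
    [IsFiniteMeasure (μ.bind κ)] (hκ : Measurable κ) :
    ∫ a, (κ a univ).toReal ∂μ = ((μ.bind κ) univ).toReal := by
  simpa [measureReal_def] using Measure.integral_integral_bind_of_nonneg hκ
    (f := fun _ => (1 : ℝ)) (fun _ => zero_le_one) measurable_const (integrable_const 1)

theorem Measure.integrable_toReal_measure_univ_of_bind {μ : Measure α} {κ : α → Measure β}
    [IsFiniteMeasure (μ.bind κ)] (hκ : Measurable κ) :
    Integrable (fun a => (κ a univ).toReal) μ :=
  integrable_toReal_of_lintegral_ne_top ((Measure.measurable_coe .univ).comp hκ).aemeasurable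
    (Measure.lintegral_measure_univ_ne_top_of_bind hκ)

theorem toReal_measure_univ_mul_integral_div {ν : Measure β} (hν : ν univ ≠ ⊤)
    (f : β → ℝ) :
    (ν univ).toReal * ((∫ b, f b ∂ν) / (ν univ).toReal) = ∫ b, f b ∂ν := by
  rcases eq_or_ne (ν univ).toReal 0 with h0 | h0
  · have : ν = 0 := Measure.measure_univ_eq_zero.mp
      (((ENNReal.toReal_eq_zero_iff _).mp h0).resolve_right hν)
    simp [this]
  · exact mul_div_cancel₀ _ h0

theorem Measure.integral_toReal_mul_integral_div_eq_bind {μ : Measure α} {κ : α → Measure β}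
    [IsFiniteMeasure (μ.bind κ)] (hκ : Measurable κ) {f : β → ℝ} (hf0 : 0 ≤ f)
    (hfm : Measurable f) (hfi : Integrable f (μ.bind κ)) :
    ∫ a, (κ a univ).toReal * ((∫ b, f b ∂κ a) / (κ a univ).toReal) ∂μ =
      ∫ b, f b ∂μ.bind κ := by
  have hfin : ∀ᵐ a ∂μ, κ a univ < ⊤ :=
    ae_lt_top ((Measure.measurable_coe .univ).comp hκ)
      (Measure.lintegral_measure_univ_ne_top_of_bind hκ)
  rw [← Measure.integral_integral_bind_of_nonneg hκ hf0 hfm hfi]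
  exact integral_congr_ae (hfin.mono fun a ha => toReal_measure_univ_mul_integral_div ha.ne f)

theorem ae_eq_one_of_integral_eq_of_integral_sq_eq {μ : Measure α} [IsFiniteMeasure μ]
    {f : α → ℝ} (hfm : AEStronglyMeasurable f μ) (hf2 : Integrable (fun a => f a ^ 2) μ)
    (h1 : ∫ a, f a ∂μ = (μ univ).toReal) (h2 : ∫ a, f a ^ 2 ∂μ = (μ univ).toReal) :
    ∀ᵐ a ∂μ, f a = 1 := by
  have hf : Integrable f μ := ((memLp_two_iff_integrable_sq hfm).mpr hf2).integrable one_le_two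
  have hexpand : (fun a => (f a - 1) ^ 2) = fun a => f a ^ 2 - 2 * f a + 1 := by
    funext a; ring
  have hlin : Integrable (fun a => f a ^ 2 - 2 * f a) μ := hf2.sub (hf.const_mul 2)
  have hint : Integrable (fun a => (f a - 1) ^ 2) μ := by
    rw [hexpand]; exact hlin.add (integrable_const 1)
  have hzero : ∫ a, (f a - 1) ^ 2 ∂μ = 0 := by
    rw [hexpand, integral_add hlin (integrable_const 1), integral_sub hf2 (hf.const_mul 2),
      integral_const_mul, h1, h2, integral_const, smul_eq_mul, measureReal_def]
    ring
  filter_upwards [(integral_eq_zero_iff_of_nonneg (fun a => sq_nonneg _) hint).mp hzero]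
    with a ha
  simpa [sub_eq_zero] using ha

section RelFitness

variable (μ : Measure α) (κ : α → Measure β)

/-- The paper's `U(i) = W(i) / (N'/N)`, with the next population `μ'` realised as `μ.bind κ`. -/
noncomputable def relFitness (a : α) : ℝ :=
  (κ a univ).toReal / (((μ.bind κ) univ).toReal / (μ univ).toReal)

variable {μ κ}

theorem measurable_relFitness (hκ : Measurable κ) : Measurable (relFitness μ κ) :=
  ((Measure.measurable_coe .univ).comp hκ).ennreal_toReal.div_const _

theorem relFitness_nonneg : 0 ≤ relFitness μ κ :=
  fun _ => by simp only [relFitness]; positivity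

theorem integrable_relFitness [IsFiniteMeasure (μ.bind κ)] (hκ : Measurable κ) :
    Integrable (relFitness μ κ) μ :=
  (Measure.integrable_toReal_measure_univ_of_bind hκ).div_const _

theorem integral_relFitness [IsFiniteMeasure (μ.bind κ)] (hκ : Measurable κ)
    (hκμ : ((μ.bind κ) univ).toReal ≠ 0) :
    ∫ a, relFitness μ κ a ∂μ = (μ univ).toReal := by
  simp only [relFitness]
  rw [integral_div, Measure.integral_toReal_measure_univ_eq_bind hκ]
  exact div_div_cancel₀ hκμ

theorem integral_relFitness_mul_integral_div [IsFiniteMeasure (μ.bind κ)] (hκ : Measurable κ)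
    {f : β → ℝ} (hf0 : 0 ≤ f) (hfm : Measurable f) (hfi : Integrable f (μ.bind κ)) :
    ∫ a, relFitness μ κ a * ((∫ b, f b ∂κ a) / (κ a univ).toReal) ∂μ =
      (μ univ).toReal / ((μ.bind κ) univ).toReal * ∫ b, f b ∂μ.bind κ := by
  rw [← Measure.integral_toReal_mul_integral_div_eq_bind hκ hf0 hfm hfi, ← integral_const_mul]
  refine integral_congr_ae (.of_forall fun a => ?_)
  simp only [relFitness]
  rw [div_div_eq_mul_div]
  ring

theorem integral_relFitness_mul_integral_relFitness_div [IsFiniteMeasure (μ.bind κ)]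
    {η : β → Measure γ} [IsFiniteMeasure ((μ.bind κ).bind η)] (hκ : Measurable κ)
    (hη : Measurable η) (hκμ : ((μ.bind κ) univ).toReal ≠ 0)
    (hηκμ : (((μ.bind κ).bind η) univ).toReal ≠ 0) :
    ∫ a, relFitness μ κ a *
        ((∫ b, relFitness (μ.bind κ) η b ∂κ a) / (κ a univ).toReal) ∂μ =
      (μ univ).toReal := by
  rw [integral_relFitness_mul_integral_div hκ relFitness_nonneg (measurable_relFitness hη)
    (integrable_relFitness hη), integral_relFitness hη hηκμ]
  exact div_mul_cancel₀ _ hκμ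

end RelFitness

end MeasureTheory

theorem weak_stationarity_characterization_general
    {I I' I'' : Type*} [MeasurableSpace I] [MeasurableSpace I'] [MeasurableSpace I'']
    (μ : Measure I) (μ' : Measure I') (μ'' : Measure I'')
    [IsFiniteMeasure μ] [IsFiniteMeasure μ'] [IsFiniteMeasure μ'']
    (hN' : 0 < (μ' univ).toReal) (hN'' : 0 < (μ'' univ).toReal)
    (w : I → Measure I') (w' : I' → Measure I'')
    (hwm : ∀ B : Set I', MeasurableSet B → Measurable fun i => w i B)
    (hw'm : ∀ C : Set I'', MeasurableSet C → Measurable fun i' => w' i' C)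
    (hdis : ∀ B : Set I', MeasurableSet B → μ' B = ∫⁻ i, w i B ∂μ)
    (hdis' : ∀ C : Set I'', MeasurableSet C → μ'' C = ∫⁻ i', w' i' C ∂μ') :
    let N := (μ univ).toReal
    let N' := (μ' univ).toReal
    let N'' := (μ'' univ).toReal
    let U : I → ℝ := fun i => (w i univ).toReal / (N' / N)
    let U' : I' → ℝ := fun i' => (w' i' univ).toReal / (N'' / N')
    let lavg : I → ℝ := fun i => (∫ i', U' i' ∂(w i)) / (w i univ).toReal
    Integrable (fun i => (U i) ^ 2) μ →
    Integrable (fun i => U i * lavg i) μ →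
    (((∀ᵐ i ∂μ, lavg i = U i) →
        (∀ᵐ i ∂μ, U i = 1) ∧ (∀ᵐ i ∂μ, lavg i = 1)) ∧
      (((∀ᵐ i ∂μ, U i = 1) ∧ (∀ᵐ i ∂μ, lavg i = 1)) →
        (∀ᵐ i ∂μ, lavg i = U i))) := by
  intro N N' N'' U U' lavg hU2 _
  have hw : Measurable w := Measure.measurable_measure.mpr hwm
  have hw' : Measurable w' := Measure.measurable_measure.mpr hw'm
  obtain rfl := Measure.eq_bind_of_forall_measurableSet hw hdis
  obtain rfl := Measure.eq_bind_of_forall_measurableSet hw' hdis'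
  have hmean : ∫ i, U i ∂μ = N := integral_relFitness hw hN'.ne'
  have hcross : ∫ i, U i * lavg i ∂μ = N :=
    integral_relFitness_mul_integral_relFitness_div hw hw' hN'.ne' hN''.ne'
  refine ⟨fun hstat => ?_, fun ⟨hU1, hlavg1⟩ => ?_⟩
  · have hsq : ∫ i, U i ^ 2 ∂μ = N := by
      refine (integral_congr_ae ?_).trans hcross
      filter_upwards [hstat] with i hi
      rw [hi, sq]
    have hU1 : ∀ᵐ i ∂μ, U i = 1 :=
      ae_eq_one_of_integral_eq_of_integral_sq_eq
        (measurable_relFitness hw).aestronglyMeasurable hU2 hmean hsq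
    exact ⟨hU1, by filter_upwards [hstat, hU1] with i h1 h2; rw [h1, h2]⟩
  · filter_upwards [hU1, hlavg1] with i h1 h2
    rw [h1, h2]

/-- Weak stationarity characterization: for composable finite-variance processes
`w : μ ↦ μ'` and `w' : μ' ↦ μ''` with relative fitnesses `U`, `U'`,
the pair is weakly stationary (`⟨U'⟩_w = U` μ-a.e.) iff `U = 1` μ-a.e.
(purely environmental) and `⟨U'⟩_w = 1` μ-a.e. -/
theorem weak_stationarity_characterization
    {I I' I'' : Type*} [MeasurableSpace I] [MeasurableSpace I'] [MeasurableSpace I'']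
    (μ : Measure I) (μ' : Measure I') (μ'' : Measure I'')
    [IsFiniteMeasure μ] [IsFiniteMeasure μ'] [IsFiniteMeasure μ'']
    (hN : 0 < (μ univ).toReal) (hN' : 0 < (μ' univ).toReal) (hN'' : 0 < (μ'' univ).toReal)
    (w : I → Measure I') (w' : I' → Measure I'')
    (hwfin : ∀ i, IsFiniteMeasure (w i)) (hw'fin : ∀ i', IsFiniteMeasure (w' i'))
    (hwm : ∀ B : Set I', MeasurableSet B → Measurable fun i => w i B)
    (hw'm : ∀ C : Set I'', MeasurableSet C → Measurable fun i' => w' i' C)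
    (hdis : ∀ B : Set I', MeasurableSet B → μ' B = ∫⁻ i, w i B ∂μ)
    (hdis' : ∀ C : Set I'', MeasurableSet C → μ'' C = ∫⁻ i', w' i' C ∂μ') :
    let N := (μ univ).toReal
    let N' := (μ' univ).toReal
    let N'' := (μ'' univ).toReal
    let U : I → ℝ := fun i => (w i univ).toReal / (N' / N)
    let U' : I' → ℝ := fun i' => (w' i' univ).toReal / (N'' / N')
    let lavg : I → ℝ := fun i => (∫ i', U' i' ∂(w i)) / (w i univ).toReal
    Integrable (fun i => (U i) ^ 2) μ →
    Integrable (fun i => U i * lavg i) μ →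
    (((∀ᵐ i ∂μ, lavg i = U i) →
        (∀ᵐ i ∂μ, U i = 1) ∧ (∀ᵐ i ∂μ, lavg i = 1)) ∧
      (((∀ᵐ i ∂μ, U i = 1) ∧ (∀ᵐ i ∂μ, lavg i = 1)) →
        (∀ᵐ i ∂μ, lavg i = U i))) :=
  weak_stationarity_characterization_general μ μ' μ'' hN' hN'' w w' hwm hw'm hdis hdis'
end

section
/- Let w : μ ↦ μ' be a finite-variance evolutionary process with fitness W. Define the purely selective process w_NS : μ ↦ Wμ by (w_NS)_i := W(ĩ)·δ_i (Dirac mass weighted by fitness) and the purely environmental process w_EC : Wμ ↦ μ' by (w_EC)_ĩ := w_ĩ/W(ĩ) on {W > 0}. Then w = w_EC ∘ w_NS as transition kernels, w_NS has the same fitness function W as w, and w_EC has constant fitness 1 (i.e., (w_EC)_ĩ(I') = 1 for all ĩ with W(ĩ) > 0). -/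
/-! Integrating against `W(i) • δ_i` evaluates at `i` and multiplies by `W(i)`, which cancels the
normalisation `W(i)⁻¹` of `w_EC` because `W(i) < ∞`; when `W(i) = 0` the measure `w i` is itself
zero, so the junk value `0⁻¹ = ⊤` is harmless. -/

open MeasureTheory Real Set

open scoped ENNReal

namespace MeasureTheory

variable {α β : Type*} [MeasurableSpace α] [MeasurableSpace β]

theorem lintegral_smul_dirac {f : α → ℝ≥0∞} (hf : Measurable f) (c : ℝ≥0∞) (a : α) :
    ∫⁻ x, f x ∂(c • Measure.dirac a) = c * f a := by
  rw [lintegral_smul_measure, lintegral_dirac' a hf, smul_eq_mul]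

theorem Measure.measure_univ_smul_inv_smul_self (ν : Measure β) [IsFiniteMeasure ν] :
    ν univ • (ν univ)⁻¹ • ν = ν := by
  rcases eq_zero_or_neZero ν with rfl | _
  · simp
  · rw [smul_smul, ENNReal.mul_inv_cancel (measure_univ_ne_zero.mpr (NeZero.ne ν))
      (measure_ne_top ν univ), one_smul]

theorem measurable_inv_measure_univ_smul_apply {w : α → Measure β}
    (hw : ∀ B, MeasurableSet B → Measurable fun a => w a B) {C : Set β} (hC : MeasurableSet C) :
    Measurable fun a => ((w a univ)⁻¹ • w a) C := by
  simp only [Measure.smul_apply, smul_eq_mul]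
  exact (hw univ MeasurableSet.univ).inv.mul (hw C hC)

end MeasureTheory

theorem price_representation_general
    {I I' : Type*} [MeasurableSpace I] [MeasurableSpace I']
    (w : I → Measure I') (hwfin : ∀ i, IsFiniteMeasure (w i))
    (hwm : ∀ B : Set I', MeasurableSet B → Measurable fun i => w i B) :
    let wNS : I → Measure I := fun i => (w i univ) • Measure.dirac i
    let wEC : I → Measure I' := fun j => (w j univ)⁻¹ • w j
    (∀ i, ∀ C : Set I', MeasurableSet C →
        (∫⁻ j, wEC j C ∂(wNS i)) = w i C) ∧
      (∀ i, wNS i univ = w i univ) ∧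
      (∀ i, w i univ ≠ 0 → wEC i univ = 1) := by
  intro wNS wEC
  refine ⟨fun i C hC => ?_, fun i => by simp [wNS], fun i hi => ?_⟩
  · rw [lintegral_smul_dirac (measurable_inv_measure_univ_smul_apply hwm hC),
      ← smul_eq_mul, ← Measure.smul_apply, Measure.measure_univ_smul_inv_smul_self]
  · have : NeZero (w i) := ⟨fun h => hi (by simp [h])⟩
    -- `(ν univ)⁻¹ • ν` is a probability measure by the instance `isProbabilityMeasureSMul`
    exact measure_univ

/-- Price Representation Theorem: every evolutionary process `w : μ ↦ μ'` factors
as a purely environmental process after a purely selective one: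
`w = w_EC ∘ w_NS`, where `(w_NS)_i = W(i)·δ_i` and `(w_EC)_ĩ = w_ĩ / W(ĩ)`.
Moreover `w_NS` has the same fitness as `w`, and `w_EC` has constant fitness `1`
on `{W > 0}`. -/
theorem price_representation
    {I I' : Type*} [MeasurableSpace I] [MeasurableSpace I']
    (μ : Measure I) (μ' : Measure I') [IsFiniteMeasure μ] [IsFiniteMeasure μ']
    (w : I → Measure I') (hwfin : ∀ i, IsFiniteMeasure (w i))
    (hwm : ∀ B : Set I', MeasurableSet B → Measurable fun i => w i B)
    (hdis : ∀ B : Set I', MeasurableSet B → μ' B = ∫⁻ i, w i B ∂μ) :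
    let wNS : I → Measure I := fun i => (w i univ) • Measure.dirac i
    let wEC : I → Measure I' := fun j => (w j univ)⁻¹ • w j
    (∀ i, ∀ C : Set I', MeasurableSet C →
        (∫⁻ j, wEC j C ∂(wNS i)) = w i C) ∧
      (∀ i, wNS i univ = w i univ) ∧
      (∀ i, w i univ ≠ 0 → wEC i univ = 1) :=
  price_representation_general w hwfin hwm
end

section
/- Let w : μ ↦ μ' and w' : μ' ↦ μ'' be composable finite-variance evolutionary processes. Define the composed relative fitness U⁽²⁾(i) := ⟨U'⟩_w(i)·U(i), and, with E'_w[Y](i) := ⟨Y⟩_w(i)·U(i), define the conditional variance var'_w(U')(i) := E'_w[(U')²](i) − E'_w[U'](i)². Then the multi-level variance identity holds: var'(U') = var(U⁽²⁾) + E[var'_w(U')]. -/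
open MeasureTheory Real Set

private lemma l2l1_aux {α : Type*} [MeasurableSpace α] (ν : Measure α) [IsFiniteMeasure ν]
    (f : α → ℝ) (hfm : AEStronglyMeasurable f ν) (hf2 : Integrable (fun x => f x ^ 2) ν) :
    Integrable f ν := by
  refine Integrable.mono' ((hf2.add (integrable_const 1)).div_const 2) hfm
    (Filter.Eventually.of_forall fun x => ?_)
  simp only [Pi.add_apply, Real.norm_eq_abs]
  nlinarith [sq_abs (f x), sq_nonneg (|f x| - 1)]

/-- Multi-level variance identity: for composable processes with relative
fitnesses `U`, `U'`, composed relative fitness `U⁽²⁾ = ⟨U'⟩_w · U` and conditional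
variance `var'_w(U') = ⟨(U')²⟩_w·U − (⟨U'⟩_w·U)²`, one has
`var'(U') = var(U⁽²⁾) + E[var'_w(U')]`. -/
theorem multilevel_variance_identity
    {I I' I'' : Type*} [MeasurableSpace I] [MeasurableSpace I'] [MeasurableSpace I'']
    (μ : Measure I) (μ' : Measure I') (μ'' : Measure I'')
    [IsFiniteMeasure μ] [IsFiniteMeasure μ'] [IsFiniteMeasure μ'']
    (hN : 0 < (μ univ).toReal) (hN' : 0 < (μ' univ).toReal) (hN'' : 0 < (μ'' univ).toReal)
    (w : I → Measure I') (w' : I' → Measure I'')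
    (hwfin : ∀ i, IsFiniteMeasure (w i)) (hw'fin : ∀ i', IsFiniteMeasure (w' i'))
    (hwm : ∀ B : Set I', MeasurableSet B → Measurable fun i => w i B)
    (hw'm : ∀ C : Set I'', MeasurableSet C → Measurable fun i' => w' i' C)
    (hdis : ∀ B : Set I', MeasurableSet B → μ' B = ∫⁻ i, w i B ∂μ)
    (hdis' : ∀ C : Set I'', MeasurableSet C → μ'' C = ∫⁻ i', w' i' C ∂μ') :
    let N := (μ univ).toReal
    let N' := (μ' univ).toReal
    let N'' := (μ'' univ).toReal
    let U : I → ℝ := fun i => (w i univ).toReal / (N' / N)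
    let U' : I' → ℝ := fun i' => (w' i' univ).toReal / (N'' / N')
    let lavg : (I' → ℝ) → I → ℝ := fun Y i => (∫ i', Y i' ∂(w i)) / (w i univ).toReal
    let U2 : I → ℝ := fun i => lavg U' i * U i
    let cvar : I → ℝ := fun i =>
      lavg (fun i' => (U' i') ^ 2) i * U i - (lavg U' i * U i) ^ 2
    Integrable (fun i' => (U' i') ^ 2) μ' →
    Integrable (fun i => lavg (fun i' => (U' i') ^ 2) i * U i) μ →
    Integrable (fun i => (U2 i) ^ 2) μ →
    (∫ i', (U' i' - 1) ^ 2 ∂μ') / N' =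
      (∫ i, (U2 i - 1) ^ 2 ∂μ) / N + (∫ i, cvar i ∂μ) / N := by
  intro N N' N'' U U' lavg U2 cvar h1 h2 h3
  have hNpos : 0 < N := hN
  have hN'pos : 0 < N' := hN'
  have hN''pos : 0 < N'' := hN''
  set c : ℝ := N' / N with hc
  set c' : ℝ := N'' / N' with hc'
  have hcpos : 0 < c := div_pos hN'pos hNpos
  have hc'pos : 0 < c' := div_pos hN''pos hN'pos
  -- measurability of w as a map into measures
  have hwmeas : Measurable w := Measure.measurable_of_measurable_coe w hwm
  have hbind : μ' = μ.bind w := by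
    ext s hs
    rw [hdis s hs, Measure.bind_apply hs hwmeas.aemeasurable]
  -- U' is measurable and nonnegative
  have hU'meas : Measurable U' :=
    ((hw'm univ MeasurableSet.univ).ennreal_toReal).div_const _
  have hU'nonneg : ∀ i', 0 ≤ U' i' :=
    fun i' => div_nonneg ENNReal.toReal_nonneg hc'pos.le
  -- tower property for nonnegative integrable functions
  have tower : ∀ f : I' → ℝ, Measurable f → (∀ x, 0 ≤ f x) → Integrable f μ' →
      ∫ i, (∫ i', f i' ∂(w i)) ∂μ = ∫ i', f i' ∂μ' := by
    intro f hfm hf0 hfi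
    have hL : Measurable fun i => ∫⁻ i', ENNReal.ofReal (f i') ∂(w i) :=
      (Measure.measurable_lintegral hfm.ennreal_ofReal).comp hwmeas
    have hkey : ∀ i, ∫ i', f i' ∂(w i)
        = (∫⁻ i', ENNReal.ofReal (f i') ∂(w i)).toReal := by
      intro i
      rw [integral_eq_lintegral_of_nonneg_ae (Filter.Eventually.of_forall hf0)
        hfm.aestronglyMeasurable]
    have hlint : ∫⁻ i, (∫⁻ i', ENNReal.ofReal (f i') ∂(w i)) ∂μ
        = ∫⁻ i', ENNReal.ofReal (f i') ∂μ' := by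
      rw [hbind, Measure.lintegral_bind hwmeas.aemeasurable hfm.ennreal_ofReal.aemeasurable]
    have hfin : ∫⁻ i', ENNReal.ofReal (f i') ∂μ' < ⊤ := hfi.lintegral_lt_top
    have hae : ∀ᵐ i ∂μ, (∫⁻ i', ENNReal.ofReal (f i') ∂(w i)) < ⊤ :=
      ae_lt_top hL (by rw [hlint]; exact hfin.ne)
    calc ∫ i, (∫ i', f i' ∂(w i)) ∂μ
        = ∫ i, (∫⁻ i', ENNReal.ofReal (f i') ∂(w i)).toReal ∂μ := by
          simp_rw [hkey]
      _ = (∫⁻ i, (∫⁻ i', ENNReal.ofReal (f i') ∂(w i)) ∂μ).toReal :=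
          integral_toReal hL.aemeasurable hae
      _ = (∫⁻ i', ENNReal.ofReal (f i') ∂μ').toReal := by rw [hlint]
      _ = ∫ i', f i' ∂μ' := by
          rw [integral_eq_lintegral_of_nonneg_ae (Filter.Eventually.of_forall hf0)
            hfm.aestronglyMeasurable]
  -- lavg Y · U = (∫ Y d(w i)) / c
  have hform : ∀ (Y : I' → ℝ) (i : I), lavg Y i * U i = (∫ i', Y i' ∂(w i)) / c := by
    intro Y i
    by_cases ha : (w i univ).toReal = 0
    · have : w i univ = 0 := by
        have := (hwfin i).measure_univ_lt_top
        exact (ENNReal.toReal_eq_zero_iff _).mp ha |>.resolve_right this.ne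
      have hw0 : w i = 0 := Measure.measure_univ_eq_zero.mp this
      simp [lavg, U, hw0, ha, hc]
    · show (∫ i', Y i' ∂(w i)) / (w i univ).toReal * ((w i univ).toReal / c)
        = (∫ i', Y i' ∂(w i)) / c
      field_simp
  -- ∫ U' dμ' = N'
  have hintU'val : ∫ i', U' i' ∂μ' = N' := by
    have h0 : ∫ i', (w' i' univ).toReal ∂μ' = N'' := by
      rw [integral_toReal ((hw'm univ MeasurableSet.univ).aemeasurable)
        (Filter.Eventually.of_forall fun i' => (hw'fin i').measure_univ_lt_top),
        ← hdis' univ MeasurableSet.univ]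
    show ∫ i', (w' i' univ).toReal / c' ∂μ' = N'
    rw [integral_div, h0, hc']
    field_simp
  have hU'int : Integrable U' μ' := l2l1_aux μ' U' hU'meas.aestronglyMeasurable h1
  -- U2 measurability and nonnegativity
  have hU2form : ∀ i, U2 i = (∫ i', U' i' ∂(w i)) / c := fun i => hform U' i
  have hU2meas : Measurable U2 := by
    have hL : Measurable fun i => ∫⁻ i', ENNReal.ofReal (U' i') ∂(w i) :=
      (Measure.measurable_lintegral hU'meas.ennreal_ofReal).comp hwmeas
    have : U2 = fun i => (∫⁻ i', ENNReal.ofReal (U' i') ∂(w i)).toReal / c := by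
      funext i
      rw [hU2form i, integral_eq_lintegral_of_nonneg_ae
        (Filter.Eventually.of_forall hU'nonneg) hU'meas.aestronglyMeasurable]
    rw [this]
    exact hL.ennreal_toReal.div_const _
  have hU2int : Integrable U2 μ := l2l1_aux μ U2 hU2meas.aestronglyMeasurable h3
  -- tower values
  have htower1 : ∫ i, (∫ i', U' i' ∂(w i)) ∂μ = N' := by
    rw [tower U' hU'meas hU'nonneg hU'int, hintU'val]
  set A : ℝ := ∫ i', (U' i') ^ 2 ∂μ' with hA
  have htower2 : ∫ i, (∫ i', (U' i') ^ 2 ∂(w i)) ∂μ = A :=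
    tower (fun i' => (U' i') ^ 2) (hU'meas.pow_const 2)
      (fun i' => sq_nonneg _) h1
  -- ∫ U2 dμ = N
  have hintU2 : ∫ i, U2 i ∂μ = N := by
    simp_rw [hU2form]
    rw [integral_div, htower1, hc]
    field_simp
  -- ∫ lavg U'^2 * U dμ = A / c
  have hintg2 : ∫ i, lavg (fun i' => (U' i') ^ 2) i * U i ∂μ = A / c := by
    simp_rw [hform (fun i' => (U' i') ^ 2)]
    rw [integral_div, htower2]
  set B : ℝ := ∫ i, (U2 i) ^ 2 ∂μ with hB
  -- ∫ cvar dμ = A / c - B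
  have hcvar : ∫ i, cvar i ∂μ = A / c - B := by
    have : ∀ i, cvar i = lavg (fun i' => (U' i') ^ 2) i * U i - (U2 i) ^ 2 :=
      fun i => rfl
    simp_rw [this]
    rw [integral_sub h2 h3, hintg2]
  -- expand LHS
  have hLHS : ∫ i', (U' i' - 1) ^ 2 ∂μ' = A - N' := by
    have : ∀ i', (U' i' - 1) ^ 2 = (U' i') ^ 2 - 2 * U' i' + 1 := by intro i'; ring
    simp_rw [this]
    have e1 : Integrable (fun i' => U' i' ^ 2 - 2 * U' i') μ' := by
      exact h1.sub (hU'int.const_mul 2)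
    rw [integral_add e1 (integrable_const 1),
      integral_sub h1 (hU'int.const_mul 2), integral_const_mul, hintU'val,
      integral_const]
    simp [N']
    simp only [measureReal_def, hA]
    ring
  have hMID : ∫ i, (U2 i - 1) ^ 2 ∂μ = B - N := by
    have : ∀ i, (U2 i - 1) ^ 2 = (U2 i) ^ 2 - 2 * U2 i + 1 := by intro i; ring
    simp_rw [this]
    have e1 : Integrable (fun i => U2 i ^ 2 - 2 * U2 i) μ := by
      exact h3.sub (hU2int.const_mul 2)
    rw [integral_add e1 (integrable_const 1),
      integral_sub h3 (hU2int.const_mul 2), integral_const_mul, hintU2,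
      integral_const]
    simp [N]
    simp only [measureReal_def, hB]
    ring
  rw [hLHS, hMID, hcvar, hc]
  field_simp
  ring
end

section
/- Let (Ω, μ̃) be a probability space with expectation Ẽ, let A, B be events structures inducing a measurable function M ≥ 0 with Ẽ[M] = 1 (a mixing coefficient), and let ū ∈ (0, 1], p̃ ∈ (0, 1] satisfy: M ∈ [0, 1/ū], M > 0 exactly on a set of measure p̃. Then the mixing entropy S_mix := ū·Ẽ[M log M] satisfies ū·log(1/p̃) ≤ S_mix ≤ ū·log Ẽ[M²], and both inequalities are saturated if and only if M ∈ {0, 1/p̃} almost surely. -/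
/-!
On the support `{M > 0}`, of measure `p̃`, the function `t ↦ t log t` lies above its tangent line
at `c = 1/p̃`, with gap `c · klFun (t / c) ≥ 0` vanishing only at `t = c`. Integrated over the
support, the gap equals `Ẽ[M log M] - log c` because `Ẽ[M] = 1` and `c p̃ = 1`; this gives the lower
bound and its equality case. For the upper bound, `log t ≤ log I + t / I - 1` with `I = Ẽ[M²]`,
weighted by `M` and integrated, gives `Ẽ[M log M] ≤ log I` (Jensen for `log` under the density
`M`). Conversely, if `M ∈ {0, c}` a.e. then `Ẽ[M log M] = log c` and `Ẽ[M²] = c Ẽ[M] = c`.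
-/

open MeasureTheory Real Set InformationTheory

lemma mul_klFun_div {c : ℝ} (hc : c ≠ 0) (t : ℝ) :
    c * klFun (t / c) = t * log t - (log c + 1) * t + c := by
  rcases eq_or_ne t 0 with rfl | ht
  · simp [klFun_zero]
  · rw [klFun_apply, log_div ht hc]
    field_simp
    ring

lemma mul_log_le_mul_log_add_sq_div_sub_s19 {I t : ℝ} (hI : 0 < I) (ht : 0 ≤ t) :
    t * log t ≤ t * log I + t ^ 2 / I - t := by
  rcases ht.eq_or_lt with rfl | ht
  · simp
  · have key := mul_le_mul_of_nonneg_left (log_le_sub_one_of_pos (div_pos ht hI)) ht.le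
    rw [log_div ht.ne' hI.ne'] at key
    have expand : t * (t / I - 1) = t ^ 2 / I - t := by field_simp
    linarith

lemma indicator_pos_mul_klFun_div_eq {Ω : Type*} {f : Ω → ℝ} (hf0 : 0 ≤ f) {c : ℝ}
    (hc : c ≠ 0) :
    {x | 0 < f x}.indicator (fun x => c * klFun (f x / c)) =
      fun x => f x * log (f x) - (log c + 1) * f x + {x | 0 < f x}.indicator (fun _ => c) x := by
  ext x
  by_cases hx : 0 < f x
  · simp [hx, mul_klFun_div hc]
  · simp [le_antisymm (not_lt.mp hx) (hf0 x)]

section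

variable {Ω : Type*} [MeasurableSpace Ω] {μ : Measure Ω} {f : Ω → ℝ}

lemma integrable_and_integral_indicator_pos_mul_klFun_div (hf0 : 0 ≤ f) (hf : Integrable f μ)
    (hf1 : ∫ x, f x ∂μ = 1) (hfl : Integrable (fun x => f x * log (f x)) μ) {c : ℝ}
    (hc : c * μ.real {x | 0 < f x} = 1) :
    Integrable ({x | 0 < f x}.indicator (fun x => c * klFun (f x / c))) μ ∧
      ∫ x, {x | 0 < f x}.indicator (fun x => c * klFun (f x / c)) x ∂μ =
        ∫ x, f x * log (f x) ∂μ - log c := by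
  have hS : NullMeasurableSet {x | 0 < f x} μ :=
    nullMeasurableSet_lt aemeasurable_const hf.aemeasurable
  have hSfin : μ {x | 0 < f x} ≠ ⊤ :=
    (ENNReal.toReal_ne_zero.mp (right_ne_zero_of_mul_eq_one hc)).2
  have hind : Integrable ({x | 0 < f x}.indicator fun _ => c) μ :=
    (integrableOn_const hSfin).integrable_indicator₀ hS
  have htangent : Integrable (fun x => f x * log (f x) - (log c + 1) * f x) μ :=
    hfl.sub (hf.const_mul _)
  rw [indicator_pos_mul_klFun_div_eq hf0 (left_ne_zero_of_mul_eq_one hc)]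
  refine ⟨htangent.add hind, ?_⟩
  beta_reduce
  rw [integral_add htangent hind, integral_sub hfl (hf.const_mul _), integral_const_mul,
    integral_indicator₀ hS, setIntegral_const, smul_eq_mul, mul_comm _ c, hc, hf1]
  ring

lemma log_one_div_le_integral_mul_log (hf0 : 0 ≤ f) (hf : Integrable f μ)
    (hf1 : ∫ x, f x ∂μ = 1) (hfl : Integrable (fun x => f x * log (f x)) μ)
    (hp : 0 < μ.real {x | 0 < f x}) :
    log (1 / μ.real {x | 0 < f x}) ≤ ∫ x, f x * log (f x) ∂μ := by
  set c := 1 / μ.real {x | 0 < f x}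
  have hc : 0 < c := by positivity
  have hgap := (integrable_and_integral_indicator_pos_mul_klFun_div hf0 hf hf1 hfl (c := c)
    (one_div_mul_cancel hp.ne')).2
  have hgap_nonneg : 0 ≤ ∫ x, {x | 0 < f x}.indicator (fun x => c * klFun (f x / c)) x ∂μ :=
    integral_nonneg <| indicator_nonneg fun x _ =>
      mul_nonneg hc.le (klFun_nonneg (div_nonneg (hf0 x) hc.le))
  linarith

lemma integral_mul_log_eq_log_one_div_iff (hf0 : 0 ≤ f) (hf : Integrable f μ)
    (hf1 : ∫ x, f x ∂μ = 1) (hfl : Integrable (fun x => f x * log (f x)) μ)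
    (hp : 0 < μ.real {x | 0 < f x}) :
    ∫ x, f x * log (f x) ∂μ = log (1 / μ.real {x | 0 < f x}) ↔
      ∀ᵐ x ∂μ, f x = 0 ∨ f x = 1 / μ.real {x | 0 < f x} := by
  set c := 1 / μ.real {x | 0 < f x}
  have hc : 0 < c := by positivity
  obtain ⟨hint, hgap⟩ := integrable_and_integral_indicator_pos_mul_klFun_div hf0 hf hf1 hfl
    (c := c) (one_div_mul_cancel hp.ne')
  have hgap_nonneg : 0 ≤ {x | 0 < f x}.indicator (fun x => c * klFun (f x / c)) :=
    indicator_nonneg fun x _ => mul_nonneg hc.le (klFun_nonneg (div_nonneg (hf0 x) hc.le))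
  rw [← sub_eq_zero, ← hgap, integral_eq_zero_iff_of_nonneg hgap_nonneg hint]
  refine Filter.eventually_congr (Filter.Eventually.of_forall fun x => ?_)
  simp only [Pi.zero_apply, indicator_apply_eq_zero, mem_ofPred_eq, mul_eq_zero, hc.ne', false_or,
    klFun_eq_zero_iff (div_nonneg (hf0 x) hc.le), div_eq_one_iff_eq hc.ne']
  rcases (hf0 x : 0 ≤ f x).eq_or_lt with h | h
  · simp [← h, hc.ne]
  · exact ⟨fun H => .inr (H h), fun H _ => H.resolve_left h.ne'⟩

lemma integral_sq_pos (hf1 : ∫ x, f x ∂μ = 1) (hf2 : Integrable (fun x => f x ^ 2) μ) :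
    0 < ∫ x, f x ^ 2 ∂μ := by
  refine (integral_nonneg fun x => sq_nonneg (f x)).lt_of_ne fun hzero => ?_
  have hf_ae : f =ᵐ[μ] 0 :=
    ((integral_eq_zero_iff_of_nonneg (fun x => sq_nonneg (f x)) hf2).mp hzero.symm).mono
      fun x hx => pow_eq_zero_iff two_ne_zero |>.mp hx
  simp [integral_congr_ae hf_ae] at hf1

lemma integral_mul_log_le_log_integral_sq_s19 (hf0 : 0 ≤ f) (hf : Integrable f μ)
    (hf1 : ∫ x, f x ∂μ = 1) (hfl : Integrable (fun x => f x * log (f x)) μ)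
    (hf2 : Integrable (fun x => f x ^ 2) μ) :
    ∫ x, f x * log (f x) ∂μ ≤ log (∫ x, f x ^ 2 ∂μ) := by
  set I := ∫ x, f x ^ 2 ∂μ
  have hI : 0 < I := integral_sq_pos hf1 hf2
  have hlin : Integrable (fun x => f x * log I + f x ^ 2 / I) μ :=
    (hf.mul_const _).add (hf2.div_const _)
  calc ∫ x, f x * log (f x) ∂μ
      ≤ ∫ x, (f x * log I + f x ^ 2 / I - f x) ∂μ :=
        integral_mono hfl (hlin.sub hf) fun x => mul_log_le_mul_log_add_sq_div_sub_s19 hI (hf0 x)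
    _ = log I := by
        rw [integral_sub hlin hf, integral_add (hf.mul_const _) (hf2.div_const _),
          integral_mul_const, integral_div, hf1, div_self hI.ne']
        ring

lemma integral_mul_log_eq_and_integral_sq_eq_of_ae_eq_zero_or_eq {c : ℝ}
    (hf1 : ∫ x, f x ∂μ = 1) (hfc : ∀ᵐ x ∂μ, f x = 0 ∨ f x = c) :
    ∫ x, f x * log (f x) ∂μ = log c ∧ ∫ x, f x ^ 2 ∂μ = c := by
  have hlog : (fun x => f x * log (f x)) =ᵐ[μ] fun x => log c * f x :=
    hfc.mono fun x hx => by rcases hx with hx | hx <;> simp only [hx] <;> ring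
  have hsq : (fun x => f x ^ 2) =ᵐ[μ] fun x => c * f x :=
    hfc.mono fun x hx => by rcases hx with hx | hx <;> simp only [hx] <;> ring
  rw [integral_congr_ae hlog, integral_congr_ae hsq, integral_const_mul, integral_const_mul, hf1]
  simp

end

theorem mixing_entropy_bounds_general
    {Ω : Type*} [MeasurableSpace Ω] (μ : Measure Ω)
    (M : Ω → ℝ) (hM0 : ∀ x, 0 ≤ M x)
    (ub pt : ℝ) (hub : 0 < ub) (hpt : 0 < pt)
    (hM1 : ∫ x, M x ∂μ = 1)
    (hptdef : (μ {x | 0 < M x}).toReal = pt)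
    (hint1 : Integrable (fun x => M x * Real.log (M x)) μ)
    (hint2 : Integrable (fun x => (M x) ^ 2) μ) :
    let S := ub * ∫ x, M x * Real.log (M x) ∂μ
    ub * Real.log (1 / pt) ≤ S ∧
      S ≤ ub * Real.log (∫ x, (M x) ^ 2 ∂μ) ∧
      ((ub * Real.log (1 / pt) = S ∧ S = ub * Real.log (∫ x, (M x) ^ 2 ∂μ)) ↔
        ∀ᵐ x ∂μ, M x = 0 ∨ M x = 1 / pt) := by
  intro S
  obtain rfl : μ.real {x | 0 < M x} = pt := hptdef
  have hM : Integrable M μ := .of_integral_ne_zero (hM1 ▸ one_ne_zero)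
  refine ⟨?_, ?_, ⟨fun ⟨hlow, _⟩ => ?_, fun htwo => ?_⟩⟩
  · exact mul_le_mul_of_nonneg_left (log_one_div_le_integral_mul_log hM0 hM hM1 hint1 hpt) hub.le
  · exact mul_le_mul_of_nonneg_left
      (integral_mul_log_le_log_integral_sq_s19 hM0 hM hM1 hint1 hint2) hub.le
  · exact (integral_mul_log_eq_log_one_div_iff hM0 hM hM1 hint1 hpt).mp
      (mul_left_cancel₀ hub.ne' hlow).symm
  · obtain ⟨hlog, hsq⟩ := integral_mul_log_eq_and_integral_sq_eq_of_ae_eq_zero_or_eq hM1 htwo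
    simp only [S, hlog, hsq, and_self]

/-- Strong bounds on mixing entropy: if `M ≥ 0` is a mixing coefficient on a
probability space with `Ẽ[M] = 1`, `M ≤ 1/ū`, and `M > 0` exactly on a set of
measure `p̃`, then the mixing entropy `S_mix = ū·Ẽ[M log M]` satisfies
`ū·log(1/p̃) ≤ S_mix ≤ ū·log Ẽ[M²]`, with both inequalities saturated iff
`M ∈ {0, 1/p̃}` almost surely. -/
theorem mixing_entropy_bounds
    {Ω : Type*} [MeasurableSpace Ω] (μ : Measure Ω) [IsProbabilityMeasure μ]
    (M : Ω → ℝ) (hM : Measurable M) (hM0 : ∀ x, 0 ≤ M x)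
    (ub pt : ℝ) (hub : 0 < ub) (hub1 : ub ≤ 1) (hpt : 0 < pt) (hpt1 : pt ≤ 1)
    (hM1 : ∫ x, M x ∂μ = 1)
    (hMub : ∀ x, M x ≤ 1 / ub)
    (hptdef : (μ {x | 0 < M x}).toReal = pt)
    (hint1 : Integrable (fun x => M x * Real.log (M x)) μ)
    (hint2 : Integrable (fun x => (M x) ^ 2) μ) :
    let S := ub * ∫ x, M x * Real.log (M x) ∂μ
    ub * Real.log (1 / pt) ≤ S ∧
      S ≤ ub * Real.log (∫ x, (M x) ^ 2 ∂μ) ∧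
      ((ub * Real.log (1 / pt) = S ∧ S = ub * Real.log (∫ x, (M x) ^ 2 ∂μ)) ↔
        ∀ᵐ x ∂μ, M x = 0 ∨ M x = 1 / pt) :=
  mixing_entropy_bounds_general μ M hM0 ub pt hub hpt hM1 hptdef hint1 hint2
end
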